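/- arXiv:1610.06338 — 4 statements merged into one kernel-verified Lean document; each statement's English description precedes it below -/
import Mathlib

section
/- Assume conditions (I1)-(I9) and that J is coercive on N (J(u_n) → ∞ for every sequence (u_n) ⊂ N with ‖u_n‖ → ∞). Let c_M := inf_{γ∈Γ} max_{t∈[0,1]} J(γ(t)) with Γ := {γ ∈ C([0,1], M) : γ(0) = 0, ‖γ(1)⁺‖ > r, J(γ(1)) < a}, and let c_N := inf_{u∈N} J(u). Then c_M ≤ c_N, and if c_M is achieved by a critical point of J then c_M = c_N. -/
open Filter Topology Set

noncomputable section

variable {X : Type*} [NormedAddCommGroup X] [NormedSpace ℝ X] [CompleteSpace X]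

/-- 𝒯-convergence of a sequence: norm convergence of the `X⁺`-components together with
weak convergence of the `X̃`-components (`P` is the projection onto `X⁺` along `X̃`). -/
def TConv (P : X →L[ℝ] X) (u : ℕ → X) (l : X) : Prop :=
  Tendsto (fun n => P (u n)) atTop (𝓝 (P l)) ∧
    ∀ φ : StrongDual ℝ X, Tendsto (fun n => φ (u n - P (u n))) atTop (𝓝 (φ (l - P l)))

/-- The functional `J(u) = ½‖u⁺‖² − I(u)`. -/
def Jf (P : X →L[ℝ] X) (I : X → ℝ) : X → ℝ := fun u => (1 / 2 : ℝ) * ‖P u‖ ^ 2 - I u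

/-- `M = {u ∈ X : I'(u)[v] = 0 for all v ∈ X̃}`. -/
def Mset (P : X →L[ℝ] X) (I : X → ℝ) : Set X := {u | ∀ v : X, P v = 0 → fderiv ℝ I u v = 0}

/-- The Nehari–Pankov set `N = {u ∈ X \ X̃ : J'(u)|_{ℝu ⊕ X̃} = 0}`. -/
def Nset (P : X →L[ℝ] X) (I : X → ℝ) : Set X :=
  {u | P u ≠ 0 ∧ fderiv ℝ (Jf P I) u u = 0 ∧ ∀ v : X, P v = 0 → fderiv ℝ (Jf P I) u v = 0}

/-- Structural hypotheses: `X` is a reflexive Banach space, `P : X → X` is a continuous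
linear idempotent (the projection onto `X⁺ = {u : P u = u}` along `X̃ = ker P`),
`‖u‖² = ‖u⁺‖² + ‖ũ‖²`, and the norm on `X⁺` is induced by a Hilbert inner product
(parallelogram law). -/
structure SpaceHyp (P : X →L[ℝ] X) : Prop where
  idem : ∀ u : X, P (P u) = P u
  pyth : ∀ u : X, ‖u‖ ^ 2 = ‖P u‖ ^ 2 + ‖u - P u‖ ^ 2
  parallelogram : ∀ u v : X, P u = u → P v = v →
    ‖u + v‖ ^ 2 + ‖u - v‖ ^ 2 = 2 * ‖u‖ ^ 2 + 2 * ‖v‖ ^ 2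
  reflexive : Function.Surjective (NormedSpace.inclusionInDoubleDual ℝ X)

/-- (I1) `I ∈ C¹(X, ℝ)` and `I(u) ≥ I(0) = 0`. -/
def CondI1 (I : X → ℝ) : Prop := ContDiff ℝ 1 I ∧ I 0 = 0 ∧ ∀ u : X, 0 ≤ I u

/-- (I2) `I` is 𝒯-sequentially lower semicontinuous. -/
def CondI2 (P : X →L[ℝ] X) (I : X → ℝ) : Prop :=
  ∀ (u : ℕ → X) (l : X), TConv P u l → I l ≤ Filter.liminf (fun n => I (u n)) atTop

/-- (I3) If `u_n →_𝒯 u` and `I(u_n) → I(u)` then `u_n → u` in norm. -/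
def CondI3 (P : X →L[ℝ] X) (I : X → ℝ) : Prop :=
  ∀ (u : ℕ → X) (l : X), TConv P u l → Tendsto (fun n => I (u n)) atTop (𝓝 (I l)) →
    Tendsto u atTop (𝓝 l)

/-- (I4) `‖u⁺‖ + I(u) → ∞` as `‖u‖ → ∞`. -/
def CondI4 (P : X →L[ℝ] X) (I : X → ℝ) : Prop :=
  ∀ u : ℕ → X, Tendsto (fun n => ‖u n‖) atTop atTop →
    Tendsto (fun n => ‖P (u n)‖ + I (u n)) atTop atTop

/-- (I5) If `u ∈ M` then `I(u) < I(u + v)` for every `v ∈ X̃ \ {0}`. -/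
def CondI5 (P : X →L[ℝ] X) (I : X → ℝ) : Prop :=
  ∀ u ∈ Mset P I, ∀ v : X, P v = 0 → v ≠ 0 → I u < I (u + v)

/-- (I6) `a := inf {J(u) : u ∈ X⁺, ‖u‖ = r} > 0` for some `r > 0`. -/
def CondI6 (P : X →L[ℝ] X) (I : X → ℝ) (r a : ℝ) : Prop :=
  0 < r ∧ a = sInf (Jf P I '' {u : X | P u = u ∧ ‖u‖ = r}) ∧ 0 < a

/-- (I7) There exists `u⁺ ∈ X⁺` with `sup_{v ∈ X̃} J(u⁺ + v) < a`. -/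
def CondI7 (P : X →L[ℝ] X) (I : X → ℝ) (a : ℝ) : Prop :=
  ∃ up : X, P up = up ∧ ∃ b : ℝ, b < a ∧ ∀ v : X, P v = 0 → Jf P I (up + v) ≤ b

/-- (I8) `I(t_n u_n)/t_n² → ∞` whenever `t_n → ∞` and `u_n⁺ → u⁺ ≠ 0`. -/
def CondI8 (P : X →L[ℝ] X) (I : X → ℝ) : Prop :=
  ∀ (t : ℕ → ℝ) (u : ℕ → X) (w : X), Tendsto t atTop atTop →
    Tendsto (fun n => P (u n)) atTop (𝓝 w) → w ≠ 0 →
      Tendsto (fun n => I (t n • u n) / t n ^ 2) atTop atTop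

/-- (I9) The Nehari–Pankov inequality for `I`. -/
def CondI9 (P : X →L[ℝ] X) (I : X → ℝ) : Prop :=
  ∀ u ∈ Nset P I, ∀ t : ℝ, 0 ≤ t → ∀ v : X, P v = 0 → u ≠ t • u + v →
    (t ^ 2 - 1) / 2 * fderiv ℝ I u u + t * fderiv ℝ I u v + I u - I (t • u + v) < 0

/-- A `(PS)_c`-sequence for `J`. -/
def PSSeq (P : X →L[ℝ] X) (I : X → ℝ) (c : ℝ) (u : ℕ → X) : Prop :=
  Tendsto (fun n => Jf P I (u n)) atTop (𝓝 c) ∧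
    Tendsto (fun n => ‖fderiv ℝ (Jf P I) (u n)‖) atTop (𝓝 0)

/-- `J` satisfies the `(PS)ᵀ_c`-condition in `S`: every `(PS)_c`-sequence contained in `S`
has a 𝒯-convergent subsequence. -/
def PSTCond (P : X →L[ℝ] X) (I : X → ℝ) (S : Set X) (c : ℝ) : Prop :=
  ∀ u : ℕ → X, (∀ n, u n ∈ S) → PSSeq P I c u →
    ∃ (φ : ℕ → ℕ) (l : X), StrictMono φ ∧ TConv P (u ∘ φ) l

/-- The class of mountain pass paths in `M`. -/
def GammaSet (P : X →L[ℝ] X) (I : X → ℝ) (r a : ℝ) : Set C(unitInterval, X) :=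
  {γ | (∀ t, γ t ∈ Mset P I) ∧ γ 0 = 0 ∧ r < ‖P (γ 1)‖ ∧ Jf P I (γ 1) < a}

/-- The mountain pass level `c_M = inf_{γ ∈ Γ} max_{t ∈ [0,1]} J(γ(t))`. -/
def cMP (P : X →L[ℝ] X) (I : X → ℝ) (r a : ℝ) : ℝ :=
  sInf ((fun γ : C(unitInterval, X) => sSup (range fun t => Jf P I (γ t))) '' GammaSet P I r a)

/-- The Nehari–Pankov level `c_N = inf_N J`. -/
def cNP (P : X →L[ℝ] X) (I : X → ℝ) : ℝ := sInf (Jf P I '' Nset P I)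


section Aux
set_option linter.unusedSectionVars false
open NormedSpace




/-- Restriction of functionals to a submodule, as a continuous linear map. -/
noncomputable def restrDual (Y : Submodule ℝ X) : StrongDual ℝ X →L[ℝ] StrongDual ℝ Y :=
  LinearMap.mkContinuous
    { toFun := fun (φ : StrongDual ℝ X) => φ.comp Y.subtypeL
      map_add' := fun φ ψ => by ext y; simp
      map_smul' := fun c φ => by ext y; simp }
    1
    (fun φ => by
      rw [one_mul]
      refine ContinuousLinearMap.opNorm_le_bound _ (norm_nonneg φ) fun y => ?_
      calc ‖φ (Y.subtypeL y)‖ ≤ ‖φ‖ * ‖(y : X)‖ := φ.le_opNorm _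
        _ = ‖φ‖ * ‖y‖ := rfl)

@[simp] lemma restrDual_apply (Y : Submodule ℝ X) (φ : StrongDual ℝ X) (y : Y) :
    restrDual Y φ y = φ (y : X) := rfl

/-- A closed subspace of a reflexive space is reflexive (representation form). -/
theorem subspace_reflexive (Y : Submodule ℝ X) (hYc : IsClosed (Y : Set X))
    (hrefl : Function.Surjective (inclusionInDoubleDual ℝ X))
    (Λ : StrongDual ℝ (StrongDual ℝ Y)) : ∃ y : Y, ∀ ψ : StrongDual ℝ Y, ψ y = Λ ψ := by
  obtain ⟨x, hx⟩ := hrefl (Λ.comp (restrDual Y))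
  have hx' : ∀ φ : StrongDual ℝ X, φ x = Λ (restrDual Y φ) := by
    intro φ
    have := congrArg (fun T => T φ) hx
    simpa [dual_def] using this
  have hxY : x ∈ Y := by
    by_contra hxY
    obtain ⟨f, u, hfY, hfx⟩ := geometric_hahn_banach_closed_point Y.convex hYc hxY
    have hf0 : ∀ y ∈ Y, f y = 0 := by
      intro y hy
      by_contra h0
      have h1 := hfY (((u + 1) / f y) • y) (Y.smul_mem _ hy)
      rw [map_smul] at h1
      simp only [smul_eq_mul] at h1
      rw [div_mul_cancel₀ _ h0] at h1
      linarith
    have hres : restrDual Y f = 0 := by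
      ext y; exact hf0 y y.2
    have h1 : f x = 0 := by rw [hx' f, hres, map_zero]
    have h2 : (0:ℝ) < u := by
      have := hfY 0 Y.zero_mem
      simpa using this
    linarith
  refine ⟨⟨x, hxY⟩, fun ψ => ?_⟩
  obtain ⟨g, hg, -⟩ := exists_extension_norm_eq Y ψ
  have hres : restrDual Y g = ψ := by ext y; exact hg y
  have := hx' g
  rw [hres] at this
  rw [← this]
  exact (hg ⟨x, hxY⟩).symm

/-- If the dual of a normed space is separable, so is the space. -/
theorem separableSpace_of_dual_separable (E : Type*) [NormedAddCommGroup E] [NormedSpace ℝ E]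
    [TopologicalSpace.SeparableSpace (StrongDual ℝ E)] : TopologicalSpace.SeparableSpace E := by
  obtain ⟨D, hDc, hDd⟩ := TopologicalSpace.exists_countable_dense (StrongDual ℝ E)
  have hchoice : ∀ φ : StrongDual ℝ E, ∃ x : E, ‖x‖ ≤ 1 ∧ ‖φ‖ / 2 ≤ φ x := by
    intro φ
    rcases eq_or_ne φ 0 with rfl | hφ
    · exact ⟨0, by simp, by simp⟩
    · have hpos : 0 < ‖φ‖ := norm_pos_iff.mpr hφ
      obtain ⟨x, hx1, hx2⟩ := φ.exists_lt_apply_of_lt_opNorm (r := ‖φ‖ / 2) (by linarith)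
      rcases le_or_gt 0 (φ x) with h | h
      · exact ⟨x, hx1.le, by rw [Real.norm_eq_abs, abs_of_nonneg h] at hx2; linarith⟩
      · refine ⟨-x, by simpa using hx1.le, ?_⟩
        rw [map_neg]
        rw [Real.norm_eq_abs, abs_of_neg h] at hx2
        linarith
  choose xv hxv1 hxv2 using hchoice
  set S : Submodule ℝ E := Submodule.span ℝ (xv '' D)
  have hsepS : TopologicalSpace.IsSeparable (closure (S : Set E)) :=
    ((hDc.image xv).isSeparable.span).closure
  have htop : closure (S : Set E) = Set.univ := by
    by_contra htop
    obtain ⟨x, hx⟩ : ∃ x : E, x ∉ closure (S : Set E) := by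
      by_contra h
      push_neg at h
      exact htop (Set.eq_univ_of_forall h)
    obtain ⟨f, u, hfY, hfx⟩ := geometric_hahn_banach_closed_point
      (S.topologicalClosure.convex) (Submodule.isClosed_topologicalClosure S) (by
        simpa [Submodule.topologicalClosure_coe] using hx)
    have hf0 : ∀ y ∈ S.topologicalClosure, f y = 0 := by
      intro y hy
      by_contra h0
      have h1 := hfY (((u + 1) / f y) • y) (S.topologicalClosure.smul_mem _ hy)
      rw [map_smul] at h1
      simp only [smul_eq_mul] at h1
      rw [div_mul_cancel₀ _ h0] at h1
      linarith
    have hu : (0:ℝ) < u := by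
      have := hfY 0 S.topologicalClosure.zero_mem
      simpa using this
    have hf : f ≠ 0 := by
      intro h
      rw [h] at hfx
      simp at hfx
      linarith
    have hfpos : 0 < ‖f‖ := norm_pos_iff.mpr hf
    obtain ⟨φ, hφD, hφf⟩ := hDd.exists_dist_lt f (show (0:ℝ) < ‖f‖/4 by linarith)
    rw [dist_eq_norm] at hφf
    have hφn : (3/4) * ‖f‖ ≤ ‖φ‖ := by
      have := norm_sub_norm_le f φ
      linarith
    have hmem : xv φ ∈ S.topologicalClosure :=
      S.le_topologicalClosure (Submodule.subset_span ⟨φ, hφD, rfl⟩)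
    have hfz : f (xv φ) = 0 := hf0 _ hmem
    have hbound : φ (xv φ) ≤ ‖f‖/4 := by
      have h1 : φ (xv φ) = (φ - f) (xv φ) + f (xv φ) := by simp
      have h2 : (φ - f) (xv φ) ≤ ‖φ - f‖ * ‖xv φ‖ :=
        le_trans (le_abs_self _) ((φ - f).le_opNorm _)
      have h3 : ‖φ - f‖ * ‖xv φ‖ ≤ ‖φ - f‖ * 1 :=
        mul_le_mul_of_nonneg_left (hxv1 φ) (norm_nonneg _)
      have h4 : ‖φ - f‖ = ‖f - φ‖ := norm_sub_rev _ _
      rw [h1, hfz]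
      linarith
    have := hxv2 φ
    linarith
  exact TopologicalSpace.isSeparable_univ_iff.mp (htop ▸ hsepS)



/-- Diagonal extraction: a sequence with pointwise-bounded "coordinates" has a subsequence
along which every coordinate converges. -/
theorem exists_subseq_forall_tendsto (g : ℕ → ℕ → ℝ) (C : ℕ → ℝ)
    (hb : ∀ k n, |g n k| ≤ C k) :
    ∃ σ : ℕ → ℕ, StrictMono σ ∧ ∀ k, ∃ L, Tendsto (fun n => g (σ n) k) atTop (𝓝 L) := by
  set K : Set (ℕ → ℝ) := Set.pi Set.univ fun k => Set.Icc (-(C k)) (C k) with hKdef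
  have hK : IsCompact K := isCompact_univ_pi fun k => isCompact_Icc
  have hmem : ∀ n, (fun k => g n k) ∈ K := by
    intro n k _
    exact abs_le.mp (hb k n)
  obtain ⟨f, _, σ, hσ, hconv⟩ := hK.isSeqCompact hmem
  refine ⟨σ, hσ, fun k => ⟨f k, ?_⟩⟩
  exact ((continuous_apply k).continuousAt.tendsto).comp hconv


/-- Weak sequential compactness of bounded sequences in a reflexive space. -/
theorem exists_weak_conv_subseq
    (hrefl : Function.Surjective (inclusionInDoubleDual ℝ X))
    (x : ℕ → X) (C : ℝ) (hb : ∀ n, ‖x n‖ ≤ C) :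
    ∃ σ : ℕ → ℕ, StrictMono σ ∧ ∃ l : X,
      ∀ φ : StrongDual ℝ X, Tendsto (fun n => φ (x (σ n))) atTop (𝓝 (φ l)) := by
  classical
  set Y : Submodule ℝ X := (Submodule.span ℝ (Set.range x)).topologicalClosure with hYdef
  have hYc : IsClosed (Y : Set X) := Submodule.isClosed_topologicalClosure _
  have hsub : ∀ n, x n ∈ Y :=
    fun n => (Submodule.span ℝ (Set.range x)).le_topologicalClosure
      (Submodule.subset_span (Set.mem_range_self n))
  set y : ℕ → Y := fun n => ⟨x n, hsub n⟩ with hydef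
  have hYsep : TopologicalSpace.SeparableSpace Y := by
    have h1 : TopologicalSpace.IsSeparable (Y : Set X) :=
      ((Set.countable_range x).isSeparable.span).closure
    exact h1.separableSpace
  have hsurjY : Function.Surjective (inclusionInDoubleDual ℝ Y) := by
    intro Λ
    obtain ⟨z, hz⟩ := subspace_reflexive Y hYc hrefl Λ
    exact ⟨z, ContinuousLinearMap.ext fun ψ => (dual_def (𝕜 := ℝ) (E := Y) z ψ).trans (hz ψ)⟩
  have hDDsep : TopologicalSpace.SeparableSpace (StrongDual ℝ (StrongDual ℝ Y)) :=
    hsurjY.denseRange.separableSpace (inclusionInDoubleDual ℝ Y).continuous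
  have hDsep : TopologicalSpace.SeparableSpace (StrongDual ℝ Y) :=
    separableSpace_of_dual_separable (StrongDual ℝ Y)
  obtain ⟨D, hDc, hDd⟩ := TopologicalSpace.exists_countable_dense (StrongDual ℝ Y)
  have hDne : D.Nonempty := hDd.nonempty
  obtain ⟨ψ, hψ⟩ := Set.Countable.exists_eq_range hDc hDne
  set C' : ℝ := max C 0 with hC'def
  have hC'0 : (0:ℝ) ≤ C' := le_max_right _ _
  have hyb : ∀ n, ‖y n‖ ≤ C' := fun n => le_trans (hb n) (le_max_left _ _)
  obtain ⟨σ, hσ, hkconv⟩ := exists_subseq_forall_tendsto (fun n k => ψ k (y n))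
    (fun k => ‖ψ k‖ * C')
    (fun k n => by
      calc |ψ k (y n)| ≤ ‖ψ k‖ * ‖y n‖ := (ψ k).le_opNorm _
        _ ≤ ‖ψ k‖ * C' := mul_le_mul_of_nonneg_left (hyb n) (norm_nonneg (ψ k)))
  have hcauchy : ∀ χ : StrongDual ℝ Y, ∃ L, Tendsto (fun n => χ (y (σ n))) atTop (𝓝 L) := by
    intro χ
    refine cauchySeq_tendsto_of_complete ?_
    rw [Metric.cauchySeq_iff]
    intro ε hε
    have hεq : 0 < ε / (4 * (C' + 1)) := by positivity
    obtain ⟨χ', hχ'D, hχ'⟩ := hDd.exists_dist_lt χ hεq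
    obtain ⟨k, hk⟩ : ∃ k, χ' = ψ k := by
      rw [hψ] at hχ'D
      obtain ⟨k, hk⟩ := hχ'D
      exact ⟨k, hk.symm⟩
    obtain ⟨Lk, hLk⟩ := hkconv k
    have hLc : CauchySeq (fun n => ψ k (y (σ n))) := hLk.cauchySeq
    rw [Metric.cauchySeq_iff] at hLc
    obtain ⟨N, hN⟩ := hLc (ε/2) (by linarith)
    refine ⟨N, fun m hm n hn => ?_⟩
    have hnrm : ‖χ - ψ k‖ < ε / (4 * (C' + 1)) := by
      rw [← hk]
      exact (dist_eq_norm χ χ').symm.trans_lt hχ'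
    have key : ∀ j, |χ (y (σ j)) - ψ k (y (σ j))| ≤ ε / (4 * (C' + 1)) * C' := by
      intro j
      calc |χ (y (σ j)) - ψ k (y (σ j))| = |(χ - ψ k) (y (σ j))| := by simp
        _ ≤ ‖χ - ψ k‖ * ‖y (σ j)‖ := (χ - ψ k).le_opNorm _
        _ ≤ ε / (4 * (C' + 1)) * C' :=
            mul_le_mul hnrm.le (hyb _) (norm_nonneg _) hεq.le
    have hq : ε / (4 * (C' + 1)) * C' ≤ ε / 4 := by
      have h1 : ε / (4 * (C' + 1)) * C' ≤ ε / (4 * (C' + 1)) * (C' + 1) :=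
        mul_le_mul_of_nonneg_left (by linarith) hεq.le
      have h2 : ε / (4 * (C' + 1)) * (C' + 1) = ε / 4 := by
        have hne : C' + 1 ≠ 0 := by positivity
        field_simp
      linarith
    have hmid := hN m hm n hn
    rw [Real.dist_eq] at hmid ⊢
    have tri1 : |χ (y (σ m)) - χ (y (σ n))| ≤
        |χ (y (σ m)) - ψ k (y (σ m))| + |ψ k (y (σ m)) - χ (y (σ n))| := abs_sub_le _ _ _
    have tri2 : |ψ k (y (σ m)) - χ (y (σ n))| ≤
        |ψ k (y (σ m)) - ψ k (y (σ n))| + |ψ k (y (σ n)) - χ (y (σ n))| := abs_sub_le _ _ _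
    have k1 := key m
    have k2 := key n
    rw [abs_sub_comm] at k2
    linarith
  choose L hL using hcauchy
  have hLadd : ∀ χ₁ χ₂, L (χ₁ + χ₂) = L χ₁ + L χ₂ := fun χ₁ χ₂ =>
    tendsto_nhds_unique (hL (χ₁ + χ₂)) (by simpa using (hL χ₁).add (hL χ₂))
  have hLsmul : ∀ (c : ℝ) (χ), L (c • χ) = c * L χ := fun c χ =>
    tendsto_nhds_unique (hL (c • χ)) (by simpa using (hL χ).const_mul c)
  have hLbound : ∀ χ, |L χ| ≤ C' * ‖χ‖ := by
    intro χ
    refine le_of_tendsto' (hL χ).abs fun n => ?_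
    calc |χ (y (σ n))| ≤ ‖χ‖ * ‖y (σ n)‖ := χ.le_opNorm _
      _ ≤ ‖χ‖ * C' := mul_le_mul_of_nonneg_left (hyb _) (norm_nonneg χ)
      _ = C' * ‖χ‖ := mul_comm _ _
  set Λ : StrongDual ℝ (StrongDual ℝ Y) := LinearMap.mkContinuous
    { toFun := L, map_add' := hLadd, map_smul' := fun c χ => by simpa using hLsmul c χ } C'
    (fun χ => by simpa [Real.norm_eq_abs] using hLbound χ) with hΛdef
  obtain ⟨ly, hly⟩ := subspace_reflexive Y hYc hrefl Λ
  refine ⟨σ, hσ, (ly : X), fun φ => ?_⟩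
  have h3 : L (restrDual Y φ) = φ (ly : X) := by
    have h4 := hly (restrDual Y φ)
    have h5 : Λ (restrDual Y φ) = L (restrDual Y φ) := rfl
    rw [h5] at h4
    rw [← h4]
    rfl
  have h2 := hL (restrDual Y φ)
  rw [h3] at h2
  exact h2

theorem SpaceHyp.exists_qderiv {P : X →L[ℝ] X} (hX : SpaceHyp P) :
    ∃ D : X → (X →L[ℝ] ℝ),
      (∀ u, HasFDerivAt (fun v => (1/2 : ℝ) * ‖P v‖ ^ 2) (D u) u) ∧
      (∀ u, D u u = ‖P u‖ ^ 2) ∧ (∀ u v, P v = 0 → D u v = 0) := by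
  classical
  set Kp : Submodule ℝ X := LinearMap.ker (((ContinuousLinearMap.id ℝ X - P) : X →L[ℝ] X) : X →ₗ[ℝ] X)
    with hKp
  have hmem : ∀ x : X, x ∈ Kp ↔ P x = x := by
    intro x
    simp only [hKp, ContinuousLinearMap.coe_sub, LinearMap.mem_ker, LinearMap.sub_apply,
      ContinuousLinearMap.coe_coe, ContinuousLinearMap.sub_apply,
      ContinuousLinearMap.id_apply, sub_eq_zero]
    exact ⟨fun h => h.symm, fun h => h.symm⟩
  letI : InnerProductSpace ℝ Kp := InnerProductSpace.ofNorm ℝ (by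
    intro x y
    have hx : P (x : X) = (x : X) := (hmem _).mp x.2
    have hy : P (y : X) = (y : X) := (hmem _).mp y.2
    have := hX.parallelogram (x : X) (y : X) hx hy
    have hxy1 : ‖x + y‖ = ‖(x : X) + (y : X)‖ := rfl
    have hxy2 : ‖x - y‖ = ‖(x : X) - (y : X)‖ := rfl
    have hx1 : ‖x‖ = ‖(x : X)‖ := rfl
    have hy1 : ‖y‖ = ‖(y : X)‖ := rfl
    rw [hxy1, hxy2, hx1, hy1]
    nlinarith [this])
  set T : X →L[ℝ] Kp := P.codRestrict Kp (fun x => (hmem _).mpr (hX.idem x)) with hT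
  have hTnorm : ∀ x : X, ‖T x‖ = ‖P x‖ := fun x => rfl
  have hTapp : ∀ x : X, ((T x : Kp) : X) = P x := fun x => rfl
  refine ⟨fun u => (innerSL ℝ (T u)).comp T, fun u => ?_, fun u => ?_, fun u v hv => ?_⟩
  · have h1 : HasFDerivAt (fun v => ‖T v‖ ^ 2) (2 • (innerSL ℝ (T u)).comp T) u :=
      (T.hasFDerivAt).norm_sq
    have h2 : HasFDerivAt (fun v => (1/2 : ℝ) * ‖T v‖ ^ 2)
        ((1/2 : ℝ) • (2 • (innerSL ℝ (T u)).comp T)) u := h1.const_mul _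
    have h3 : ((1/2 : ℝ) • (2 • (innerSL ℝ (T u)).comp T)) = (innerSL ℝ (T u)).comp T := by
      ext w
      simp only [ContinuousLinearMap.smul_apply]
      rw [two_smul]
      simp only [ContinuousLinearMap.add_apply, smul_eq_mul]
      ring
    rw [h3] at h2
    have h4 : (fun v => (1/2 : ℝ) * ‖T v‖ ^ 2) = fun v => (1/2 : ℝ) * ‖P v‖ ^ 2 := by
      funext v
      rw [hTnorm]
    rwa [h4] at h2
  · have : ((innerSL ℝ (T u)).comp T) u = (inner ℝ (T u) (T u) : ℝ) := rfl
    rw [this, real_inner_self_eq_norm_sq, hTnorm]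
  · have hTv : T v = 0 := by
      apply Subtype.ext
      rw [hTapp, hv]
      rfl
    have : ((innerSL ℝ (T u)).comp T) v = (inner ℝ (T u) (T v) : ℝ) := rfl
    rw [this, hTv, inner_zero_right]


/-- Extraction of a 𝒯-convergent subsequence from a bounded sequence whose `P`-components
converge in norm. -/
theorem exists_TConv_subseq (P : X →L[ℝ] X)
    (hrefl : Function.Surjective (inclusionInDoubleDual ℝ X))
    (u : ℕ → X) (C : ℝ) (hb : ∀ n, ‖u n‖ ≤ C) {w : X}
    (hPw : Tendsto (fun n => P (u n)) atTop (𝓝 w)) :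
    ∃ σ : ℕ → ℕ, StrictMono σ ∧ ∃ l : X, P l = w ∧ TConv P (u ∘ σ) l := by
  obtain ⟨σ, hσ, l, hl⟩ := exists_weak_conv_subseq hrefl u C hb
  have hPσ : Tendsto (fun n => P (u (σ n))) atTop (𝓝 w) := hPw.comp hσ.tendsto_atTop
  have hPl : P l = w := by
    by_contra hne
    obtain ⟨φ, hφ⟩ := SeparatingDual.exists_separating_of_ne (R := ℝ) hne
    have h2 : Tendsto (fun n => φ (P (u (σ n)))) atTop (𝓝 (φ (P l))) := by
      have := hl (φ.comp P)
      simpa using this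
    have h3 : Tendsto (fun n => φ (P (u (σ n)))) atTop (𝓝 (φ w)) :=
      (φ.continuous.tendsto w).comp hPσ
    exact hφ (tendsto_nhds_unique h2 h3)
  refine ⟨σ, hσ, l, hPl, ?_, ?_⟩
  · show Tendsto (fun n => P ((u ∘ σ) n)) atTop (𝓝 (P l))
    rw [hPl]
    exact hPσ
  · intro φ
    have h1 := hl φ
    have h2 := hl (φ.comp P)
    have h3 := h1.sub h2
    simp only [ContinuousLinearMap.comp_apply] at h3
    have h4 : ∀ n, φ (u (σ n)) - φ (P (u (σ n))) = φ ((u ∘ σ) n - P ((u ∘ σ) n)) := fun n => by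
      simp [map_sub]
    have h5 : φ l - φ (P l) = φ (l - P l) := by simp [map_sub]
    rw [← h5]
    exact h3.congr h4

theorem exists_subseq_norm_atTop (x : ℕ → X) (h : ∀ C : ℝ, ∃ n, C < ‖x n‖) :
    ∃ φ : ℕ → ℕ, StrictMono φ ∧ Tendsto (fun m => ‖x (φ m)‖) atTop atTop := by
  have hfreq : ∀ m : ℕ, ∃ᶠ n in atTop, (m : ℝ) < ‖x n‖ := by
    intro m
    rw [Filter.frequently_atTop]
    intro N
    obtain ⟨n, hn⟩ := h (max (m : ℝ) ((Finset.range (N + 1)).sup' (by simp) fun i => ‖x i‖))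
    refine ⟨n, ?_, lt_of_le_of_lt (le_max_left _ _) hn⟩
    by_contra hlt
    push_neg at hlt
    have hmem : n ∈ Finset.range (N + 1) := Finset.mem_range.mpr (Nat.lt_succ_of_lt hlt)
    have hle : ‖x n‖ ≤ (Finset.range (N + 1)).sup' (by simp) fun i => ‖x i‖ :=
      Finset.le_sup' (fun i => ‖x i‖) hmem
    have h2 := le_max_right (m : ℝ) ((Finset.range (N + 1)).sup' (by simp) fun i => ‖x i‖)
    linarith
  obtain ⟨φ, hφmono, hφ⟩ := Filter.extraction_forall_of_frequently hfreq
  exact ⟨φ, hφmono,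
    tendsto_atTop_mono (fun m => (hφ m).le) tendsto_natCast_atTop_atTop⟩

theorem bounded_of_I4' (P : X →L[ℝ] X) (I : X → ℝ) (h4 : CondI4 P I)
    (x : ℕ → X) (C1 C2 : ℝ) (hP : ∀ n, ‖P (x n)‖ ≤ C1) (hI : ∀ n, I (x n) ≤ C2) :
    ∃ C, ∀ n, ‖x n‖ ≤ C := by
  by_contra h
  push_neg at h
  obtain ⟨φ, hφmono, hnorm⟩ := exists_subseq_norm_atTop x fun C => h C
  have h4' := h4 (x ∘ φ) hnorm
  have hub : ∀ m, ‖P ((x ∘ φ) m)‖ + I ((x ∘ φ) m) ≤ C1 + C2 := fun m =>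
    add_le_add (hP _) (hI _)
  obtain ⟨m, hm⟩ := (h4'.eventually_gt_atTop (C1 + C2)).exists
  exact absurd (hub m) (not_le.mpr hm)

theorem cone_bounded (P : X →L[ℝ] X) (I : X → ℝ) (h4 : CondI4 P I) (h8 : CondI8 P I)
    {w : X} (hw : w ≠ 0)
    (x : ℕ → X) (t : ℕ → ℝ) (ht0 : ∀ n, 0 ≤ t n) (hPt : ∀ n, P (x n) = t n • w)
    (b : ℝ) (hb : ∀ n, b ≤ Jf P I (x n)) : ∃ C, ∀ n, ‖x n‖ ≤ C := by
  by_contra h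
  push_neg at h
  obtain ⟨φ, hφmono, hnorm⟩ := exists_subseq_norm_atTop x fun C => h C
  set x' : ℕ → X := x ∘ φ with hx'
  set t' : ℕ → ℝ := t ∘ φ with ht'
  by_cases hcase : ∃ M : ℝ, ∃ᶠ n in atTop, t' n ≤ M
  · obtain ⟨M, hM⟩ := hcase
    obtain ⟨ρ, hρmono, hρ⟩ := Filter.extraction_of_frequently_atTop hM
    have hnorm2 : Tendsto (fun k => ‖x' (ρ k)‖) atTop atTop :=
      hnorm.comp hρmono.tendsto_atTop
    have h4' := h4 (x' ∘ ρ) hnorm2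
    have hPb : ∀ k, ‖P (x' (ρ k))‖ ≤ max M 0 * ‖w‖ := fun k => by
      show ‖P (x (φ (ρ k)))‖ ≤ _
      rw [hPt, norm_smul, Real.norm_eq_abs, abs_of_nonneg (ht0 _)]
      exact mul_le_mul_of_nonneg_right (le_trans (hρ k) (le_max_left _ _)) (norm_nonneg w)
    have hItend : Tendsto (fun k => I ((x' ∘ ρ) k)) atTop atTop := by
      apply tendsto_atTop_mono ?_
        (tendsto_atTop_add_const_right _ (-(max M 0 * ‖w‖)) h4')
      intro k
      have := hPb k
      simp only [Function.comp_apply] at this ⊢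
      linarith
    obtain ⟨k, hk⟩ :=
      (hItend.eventually_gt_atTop ((1/2) * (max M 0 * ‖w‖)^2 - b)).exists
    have hJ := hb (φ (ρ k))
    have h5 : ‖P (x (φ (ρ k)))‖^2 ≤ (max M 0 * ‖w‖)^2 :=
      pow_le_pow_left₀ (norm_nonneg _) (hPb k) 2
    have hJ' : Jf P I (x (φ (ρ k))) = (1/2 : ℝ) * ‖P (x (φ (ρ k)))‖^2 - I (x (φ (ρ k))) := rfl
    have hk' : (1/2) * (max M 0 * ‖w‖)^2 - b < I (x (φ (ρ k))) := hk
    rw [hJ'] at hJ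
    linarith
  · push_neg at hcase
    have htt : Tendsto t' atTop atTop := by
      rw [tendsto_atTop]
      intro M
      have h6 := hcase M
      exact h6.mono fun n hn => hn.le
    set z : ℕ → X := fun n => (t' n)⁻¹ • x' n with hz
    have hev : ∀ᶠ n in atTop, (1:ℝ) ≤ t' n := htt.eventually_ge_atTop 1
    have hPz : ∀ᶠ n in atTop, P (z n) = w := by
      filter_upwards [hev] with n hn
      have htn : t' n ≠ 0 := by linarith
      show P ((t' n)⁻¹ • x (φ n)) = w
      rw [map_smul, hPt, smul_smul]
      show ((t' n)⁻¹ * t' n) • w = w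
      rw [inv_mul_cancel₀ htn, one_smul]
    have hPz' : Tendsto (fun n => P (z n)) atTop (𝓝 w) :=
      tendsto_const_nhds.congr' (hPz.mono fun n hn => hn.symm)
    have h8' := h8 t' z w htt hPz' hw
    have hxz : ∀ᶠ n in atTop, t' n • z n = x' n := by
      filter_upwards [hev] with n hn
      show t' n • ((t' n)⁻¹ • x' n) = x' n
      rw [smul_inv_smul₀ (by linarith)]
    have h8'' : Tendsto (fun n => I (x' n) / t' n ^ 2) atTop atTop :=
      h8'.congr' (hxz.mono fun n hn => by rw [hn])
    have hJle : ∀ᶠ n in atTop, Jf P I (x' n) ≤ -(t' n ^ 2) := by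
      filter_upwards [h8''.eventually_ge_atTop ((1/2) * ‖w‖^2 + 1), hev] with n h1 h2
      have ht2 : (0:ℝ) < t' n ^ 2 := by positivity
      have hIge : ((1/2) * ‖w‖^2 + 1) * t' n ^ 2 ≤ I (x' n) := by
        rw [le_div_iff₀ ht2] at h1
        linarith
      have hPx : ‖P (x' n)‖^2 = t' n ^ 2 * ‖w‖^2 := by
        show ‖P (x (φ n))‖^2 = _
        rw [hPt, norm_smul, Real.norm_eq_abs, abs_of_nonneg (ht0 _), mul_pow]
        simp only [ht', Function.comp_apply]
      have hJ' : Jf P I (x' n) = (1/2 : ℝ) * ‖P (x' n)‖^2 - I (x' n) := rfl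
      rw [hJ', hPx]
      nlinarith
    obtain ⟨n, hn1, hn2⟩ := (hJle.and (htt.eventually_ge_atTop (|b| + 1))).exists
    have hb' := hb (φ n)
    have hble : b ≤ -(t' n ^ 2) := le_trans hb' hn1
    nlinarith [le_abs_self b, neg_abs_le b]

theorem exists_fiber_min (P : X →L[ℝ] X) (I : X → ℝ)
    (hrefl : Function.Surjective (inclusionInDoubleDual ℝ X))
    (h1 : CondI1 I) (h2 : CondI2 P I) (h4 : CondI4 P I)
    (w : X) (hw : P w = w) :
    ∃ mu : X, P mu = w ∧ ∀ x : X, P x = w → I mu ≤ I x := by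
  classical
  set A : Set ℝ := I '' {x | P x = w} with hA
  have hAne : A.Nonempty := ⟨I w, w, hw, rfl⟩
  have hAbdd : BddBelow A := ⟨0, fun y hy => by obtain ⟨x, _, rfl⟩ := hy; exact h1.2.2 x⟩
  obtain ⟨s, hsmono, hstend, hsmem⟩ := exists_seq_tendsto_sInf hAne hAbdd
  have hchoice : ∀ n, ∃ x, P x = w ∧ I x = s n := fun n => by
    obtain ⟨x, hx1, hx2⟩ := hsmem n
    exact ⟨x, hx1, hx2⟩
  choose xs hxs1 hxs2 using hchoice
  obtain ⟨C2, hC2'⟩ := hstend.bddAbove_range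
  have hC2 : ∀ n, I (xs n) ≤ C2 := fun n => by
    rw [hxs2]; exact hC2' (Set.mem_range_self n)
  obtain ⟨C, hC⟩ := bounded_of_I4' P I h4 xs ‖w‖ C2 (fun n => by rw [hxs1]) hC2
  have hPconst : Tendsto (fun n => P (xs n)) atTop (𝓝 w) := by
    have : (fun n => P (xs n)) = fun _ => w := funext fun n => hxs1 n
    rw [this]
    exact tendsto_const_nhds
  obtain ⟨σ, hσ, l, hPl, hTC⟩ := exists_TConv_subseq P hrefl xs C hC hPconst
  have hliminf : Filter.liminf (fun n => I ((xs ∘ σ) n)) atTop = sInf A := by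
    have htend : Tendsto (fun n => I ((xs ∘ σ) n)) atTop (𝓝 (sInf A)) := by
      have h7 := hstend.comp hσ.tendsto_atTop
      refine h7.congr fun n => ?_
      simp only [Function.comp_apply]
      rw [hxs2]
    exact htend.liminf_eq
  have hIl : I l ≤ sInf A := by
    have := h2 (xs ∘ σ) l hTC
    rwa [hliminf] at this
  exact ⟨l, hPl, fun x hx => le_trans hIl (csInf_le hAbdd ⟨x, hx, rfl⟩)⟩

theorem fiber_min_mem_M (P : X →L[ℝ] X) (I : X → ℝ) (h1 : CondI1 I)
    {w mu : X} (hPmu : P mu = w) (hmin : ∀ x : X, P x = w → I mu ≤ I x) :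
    mu ∈ Mset P I := by
  intro v hv
  have hloc : IsLocalMin (fun s : ℝ => I (mu + s • v)) 0 := by
    refine Filter.Eventually.of_forall fun s => ?_
    simpa using hmin (mu + s • v) (by rw [map_add, hPmu, map_smul, hv, smul_zero, add_zero])
  have hdiff : HasDerivAt (fun s : ℝ => I (mu + s • v)) (fderiv ℝ I mu v) 0 := by
    have h0 : mu + (0:ℝ) • v = mu := by simp
    have hI : HasFDerivAt I (fderiv ℝ I mu) (mu + (0:ℝ) • v) := by
      rw [h0]
      exact ((h1.1.differentiable one_ne_zero) mu).hasFDerivAt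
    have hline : HasDerivAt (fun s : ℝ => mu + s • v) v 0 := by
      simpa using ((hasDerivAt_id (0:ℝ)).smul_const v).const_add mu
    exact hI.comp_hasDerivAt 0 hline
  rw [← hdiff.deriv]
  exact hloc.deriv_eq_zero

theorem fiber_min_unique (P : X →L[ℝ] X) (I : X → ℝ) (h1 : CondI1 I) (h5 : CondI5 P I)
    {w mu₁ mu₂ : X} (hP₁ : P mu₁ = w) (hm₁ : ∀ x : X, P x = w → I mu₁ ≤ I x)
    (hP₂ : P mu₂ = w) (hm₂ : ∀ x : X, P x = w → I mu₂ ≤ I x) : mu₁ = mu₂ := by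
  by_contra hne
  have hv : P (mu₂ - mu₁) = 0 := by rw [map_sub, hP₁, hP₂, sub_self]
  have hvne : mu₂ - mu₁ ≠ 0 := sub_ne_zero.mpr (Ne.symm hne)
  have hlt := h5 mu₁ (fiber_min_mem_M P I h1 hP₁ hm₁) _ hv hvne
  have heq : mu₁ + (mu₂ - mu₁) = mu₂ := by abel
  rw [heq] at hlt
  have := hm₂ mu₁ hP₁
  have := hm₁ mu₂ hP₂
  linarith

theorem Jf_continuous (P : X →L[ℝ] X) (I : X → ℝ) (h1 : CondI1 I) : Continuous (Jf P I) :=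
  (continuous_const.mul ((P.continuous.norm).pow 2)).sub h1.1.continuous

theorem sphere_bddBelow (P : X →L[ℝ] X) (I : X → ℝ) (r a : ℝ) (h6 : CondI6 P I r a) :
    BddBelow (Jf P I '' {u : X | P u = u ∧ ‖u‖ = r}) := by
  by_contra h
  have h0 := Real.sInf_of_not_bddBelow h
  have h2 := h6.2.2
  rw [h6.2.1, h0] at h2
  exact lt_irrefl _ h2

theorem fderiv_zero_of_line_max (f : X → ℝ) {x : X} {f' : X →L[ℝ] ℝ} (hf : HasFDerivAt f f' x)
    (v : X) (hmax : ∀ s : ℝ, -1 < s → s < 1 → f (x + s • v) ≤ f x) : f' v = 0 := by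
  have hloc : IsLocalMax (fun s : ℝ => f (x + s • v)) 0 := by
    have h1 : ∀ᶠ s : ℝ in 𝓝 0, s ∈ Set.Ioo (-1 : ℝ) 1 :=
      Ioo_mem_nhds (by norm_num) (by norm_num)
    refine h1.mono fun s hs => ?_
    simpa using hmax s hs.1 hs.2
  have h0 : x + (0:ℝ) • v = x := by simp
  have hf' : HasFDerivAt f f' (x + (0:ℝ) • v) := by rw [h0]; exact hf
  have hline : HasDerivAt (fun s : ℝ => x + s • v) v 0 := by
    simpa using ((hasDerivAt_id (0:ℝ)).smul_const v).const_add x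
  have hdiff := hf'.comp_hasDerivAt 0 hline
  rw [← hdiff.deriv]
  exact hloc.deriv_eq_zero

theorem M_sphere_bound (P : X →L[ℝ] X) (I : X → ℝ) (hX : SpaceHyp P) (h5 : CondI5 P I)
    (r a : ℝ) (h6 : CondI6 P I r a) {x : X} (hx : x ∈ Mset P I) (hr : ‖P x‖ = r) :
    a ≤ Jf P I x := by
  have hIle : I x ≤ I (P x) := by
    rcases eq_or_ne (P x - x) 0 with h | h
    · have h2 : P x = x := by rwa [sub_eq_zero] at h
      rw [h2]
    · have hPv : P (P x - x) = 0 := by rw [map_sub, hX.idem, sub_self]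
      have h3 := h5 x hx _ hPv h
      have hxx : x + (P x - x) = P x := by abel
      rw [hxx] at h3
      exact h3.le
  have hbdd := sphere_bddBelow P I r a h6
  have h2 : a ≤ Jf P I (P x) := by
    rw [h6.2.1]
    exact csInf_le hbdd ⟨P x, ⟨hX.idem x, hr⟩, rfl⟩
  have h3 : Jf P I (P x) ≤ Jf P I x := by
    have e1 : Jf P I (P x) = (1/2 : ℝ) * ‖P (P x)‖^2 - I (P x) := rfl
    have e2 : Jf P I x = (1/2 : ℝ) * ‖P x‖^2 - I x := rfl
    rw [e1, e2, hX.idem]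
    linarith
  linarith

theorem Nset_props (P : X →L[ℝ] X) (I : X → ℝ) (hX : SpaceHyp P) (h1 : CondI1 I)
    (h9 : CondI9 P I) {u : X} (hu : u ∈ Nset P I) :
    u ∈ Mset P I ∧ fderiv ℝ I u u = ‖P u‖^2 ∧ 0 < Jf P I u ∧
      ∀ t : ℝ, 0 ≤ t → ∀ v : X, P v = 0 → Jf P I (t • u + v) ≤ Jf P I u := by
  obtain ⟨D, hD1, hD2, hD3⟩ := hX.exists_qderiv
  have hIdiff : ∀ x : X, HasFDerivAt I (fderiv ℝ I x) x := fun x =>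
    ((h1.1.differentiable one_ne_zero) x).hasFDerivAt
  have hJd : ∀ x : X, HasFDerivAt (Jf P I) (D x - fderiv ℝ I x) x := fun x =>
    (hD1 x).sub (hIdiff x)
  have hfJ : ∀ x : X, fderiv ℝ (Jf P I) x = D x - fderiv ℝ I x := fun x => (hJd x).fderiv
  obtain ⟨hPu, hJuu, hJuv⟩ := hu
  have hM : u ∈ Mset P I := by
    intro v hv
    have h7 := hJuv v hv
    rw [hfJ] at h7
    simp only [ContinuousLinearMap.sub_apply] at h7
    rw [hD3 u v hv] at h7
    linarith
  have hIu : fderiv ℝ I u u = ‖P u‖^2 := by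
    have h7 := hJuu
    rw [hfJ] at h7
    simp only [ContinuousLinearMap.sub_apply] at h7
    rw [hD2 u] at h7
    linarith
  have hune : u ≠ 0 := fun h => hPu (by rw [h, map_zero])
  have hmax : ∀ t : ℝ, 0 ≤ t → ∀ v : X, P v = 0 → Jf P I (t • u + v) ≤ Jf P I u := by
    intro t ht v hv
    by_cases heq : u = t • u + v
    · rw [← heq]
    · have h9' := h9 u ⟨hPu, hJuu, hJuv⟩ t ht v hv heq
      rw [hIu, hM v hv] at h9'
      have hPt : ‖P (t • u + v)‖^2 = t^2 * ‖P u‖^2 := by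
        rw [map_add, map_smul, hv, add_zero, norm_smul, Real.norm_eq_abs, mul_pow, sq_abs]
      have e1 : Jf P I (t • u + v) = (1/2 : ℝ) * ‖P (t • u + v)‖^2 - I (t • u + v) := rfl
      have e2 : Jf P I u = (1/2 : ℝ) * ‖P u‖^2 - I u := rfl
      rw [e1, e2, hPt]
      nlinarith
  have hJpos : 0 < Jf P I u := by
    have hz : (0:ℝ) • u + 0 = 0 := by simp
    have h9' := h9 u ⟨hPu, hJuu, hJuv⟩ 0 le_rfl 0 (map_zero P) (by rw [hz]; exact hune)
    rw [hIu, hz, h1.2.1] at h9'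
    rw [hM 0 (map_zero P)] at h9'
    have e2 : Jf P I u = (1/2 : ℝ) * ‖P u‖^2 - I u := rfl
    rw [e2]
    nlinarith
  exact ⟨hM, hIu, hJpos, hmax⟩

theorem min_seq_tendsto (P : X →L[ℝ] X) (I : X → ℝ)
    (hrefl : Function.Surjective (inclusionInDoubleDual ℝ X))
    (h1 : CondI1 I) (h2 : CondI2 P I) (h3 : CondI3 P I) (h4 : CondI4 P I) (h5 : CondI5 P I)
    (w : ℕ → X) (wl : X) (hw : ∀ n, P (w n) = w n)
    (hconv : Tendsto w atTop (𝓝 wl))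
    (mu : ℕ → X) (hmuP : ∀ n, P (mu n) = w n)
    (hmumin : ∀ n, ∀ x : X, P x = w n → I (mu n) ≤ I x)
    (mul : X) (hmulP : P mul = wl) (hmulmin : ∀ x : X, P x = wl → I mul ≤ I x) :
    Tendsto mu atTop (𝓝 mul) := by
  have hwl : P wl = wl := by
    have ha : Tendsto (fun n => P (w n)) atTop (𝓝 (P wl)) := (P.continuous.tendsto wl).comp hconv
    have hb : Tendsto (fun n => P (w n)) atTop (𝓝 wl) := hconv.congr fun n => (hw n).symm
    exact tendsto_nhds_unique ha hb
  set c : ℕ → ℝ := fun n => I (w n + (mul - wl)) with hc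
  have hcconv : Tendsto c atTop (𝓝 (I mul)) := by
    have h7 : Tendsto (fun n => w n + (mul - wl)) atTop (𝓝 (wl + (mul - wl))) :=
      hconv.add_const _
    have h8 : wl + (mul - wl) = mul := by abel
    rw [h8] at h7
    exact (h1.1.continuous.continuousAt.tendsto).comp h7
  have hmuc : ∀ n, I (mu n) ≤ c n := fun n =>
    hmumin n _ (by rw [map_add, hw, map_sub, hmulP, hwl, sub_self, add_zero])
  apply tendsto_of_subseq_tendsto
  intro ns hns
  obtain ⟨C2, hC2⟩ := hcconv.bddAbove_range
  have hIb : ∀ k, I ((mu ∘ ns) k) ≤ C2 := fun k =>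
    le_trans (hmuc _) (hC2 (Set.mem_range_self _))
  obtain ⟨C1, hC1⟩ := hconv.norm.bddAbove_range
  have hPb : ∀ k, ‖P ((mu ∘ ns) k)‖ ≤ C1 := fun k => by
    show ‖P (mu (ns k))‖ ≤ C1
    rw [hmuP]
    exact hC1 (Set.mem_range_self _)
  obtain ⟨C, hC⟩ := bounded_of_I4' P I h4 (mu ∘ ns) C1 C2 hPb hIb
  have hPt : Tendsto (fun k => P ((mu ∘ ns) k)) atTop (𝓝 wl) := by
    have h7 := hconv.comp hns
    exact h7.congr fun k => (hmuP (ns k)).symm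
  obtain ⟨ms, hms, l, hPl, hTC⟩ := exists_TConv_subseq P hrefl (mu ∘ ns) C hC hPt
  have hlfiber : I mul ≤ I l := hmulmin l hPl
  have hliminf : I l ≤ Filter.liminf (fun k => I (((mu ∘ ns) ∘ ms) k)) atTop :=
    h2 ((mu ∘ ns) ∘ ms) l hTC
  have hcomp : Tendsto (fun k => c (ns (ms k))) atTop (𝓝 (I mul)) :=
    hcconv.comp (hns.comp hms.tendsto_atTop)
  have hub : ∀ k, I (((mu ∘ ns) ∘ ms) k) ≤ c (ns (ms k)) := fun k => hmuc _
  have hBle : Filter.IsBoundedUnder (· ≤ ·) atTop (fun k => I (((mu ∘ ns) ∘ ms) k)) :=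
    (hcomp.isBoundedUnder_le).mono_le (Filter.Eventually.of_forall hub)
  have hBge : Filter.IsBoundedUnder (· ≥ ·) atTop (fun k => I (((mu ∘ ns) ∘ ms) k)) :=
    ⟨0, Filter.eventually_map.mpr (Filter.Eventually.of_forall fun k => h1.2.2 _)⟩
  have hlimsup : Filter.limsup (fun k => I (((mu ∘ ns) ∘ ms) k)) atTop ≤ I mul := by
    have h8 : Filter.limsup (fun k => I (((mu ∘ ns) ∘ ms) k)) atTop ≤
        Filter.limsup (fun k => c (ns (ms k))) atTop :=
      Filter.limsup_le_limsup (Filter.Eventually.of_forall hub)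
        (hBge.isCoboundedUnder_le) (hcomp.isBoundedUnder_le)
    rwa [hcomp.limsup_eq] at h8
  have hIconv : Tendsto (fun k => I (((mu ∘ ns) ∘ ms) k)) atTop (𝓝 (I l)) :=
    tendsto_of_le_liminf_of_limsup_le hliminf (le_trans hlimsup hlfiber) hBle hBge
  have hlmin : ∀ x : X, P x = wl → I l ≤ I x := by
    intro x hx
    have h9 := Filter.liminf_le_limsup hBle hBge
    exact le_trans (le_trans hliminf h9) (le_trans hlimsup (hmulmin x hx))
  have hlu : l = mul := fiber_min_unique P I h1 h5 hPl hlmin hmulP hmulmin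
  have hfin := h3 ((mu ∘ ns) ∘ ms) l hTC hIconv
  rw [hlu] at hfin
  exact ⟨ms, hfin⟩

theorem gamma_sup_ge (P : X →L[ℝ] X) (I : X → ℝ) (hX : SpaceHyp P) (h1 : CondI1 I)
    (h5 : CondI5 P I) (r a : ℝ) (h6 : CondI6 P I r a) {γ : C(unitInterval, X)}
    (hγ : γ ∈ GammaSet P I r a) : a ≤ sSup (Set.range fun t => Jf P I (γ t)) := by
  obtain ⟨hM, h0, h1r, hJ1⟩ := hγ
  have hcont : Continuous fun t : unitInterval => ‖P (γ t)‖ :=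
    (P.continuous.comp γ.continuous).norm
  set f : ℝ → ℝ := fun τ => ‖P (γ (Set.projIcc 0 1 zero_le_one τ))‖ with hf
  have hfc : Continuous f := hcont.comp (continuous_projIcc)
  have hproj0 : Set.projIcc (0:ℝ) 1 zero_le_one 0 = (0:unitInterval) := by
    simp [Set.projIcc_left]
  have hproj1 : Set.projIcc (0:ℝ) 1 zero_le_one 1 = (1:unitInterval) := by
    simp [Set.projIcc_right]
  have hmem : r ∈ Set.Icc (f 0) (f 1) := by
    constructor
    · show f 0 ≤ r
      rw [hf]
      simp only [hproj0]
      rw [h0]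
      simpa using h6.1.le
    · show r ≤ f 1
      rw [hf]
      simp only [hproj1]
      exact h1r.le
  obtain ⟨τ, -, hτ⟩ := intermediate_value_Icc (zero_le_one) hfc.continuousOn hmem
  set s : unitInterval := Set.projIcc 0 1 zero_le_one τ with hsdef
  have hs : ‖P (γ s)‖ = r := hτ
  have hbound := M_sphere_bound P I hX h5 r a h6 (hM s) hs
  have hbdd : BddAbove (Set.range fun t => Jf P I (γ t)) :=
    (isCompact_range ((Jf_continuous P I h1).comp γ.continuous)).bddAbove
  exact le_trans hbound (le_csSup hbdd ⟨s, rfl⟩)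

theorem exists_path (P : X →L[ℝ] X) (I : X → ℝ) (hX : SpaceHyp P)
    (h1 : CondI1 I) (h2 : CondI2 P I) (h3 : CondI3 P I) (h4 : CondI4 P I) (h5 : CondI5 P I)
    (h8 : CondI8 P I) (r a : ℝ)
    {u : X} (hPu : P u ≠ 0)
    (hmax : ∀ t : ℝ, 0 ≤ t → ∀ v : X, P v = 0 → Jf P I (t • u + v) ≤ Jf P I u) :
    ∃ γ : C(unitInterval, X), γ ∈ GammaSet P I r a ∧ ∀ s, Jf P I (γ s) ≤ Jf P I u := by
  classical
  set w : X := P u with hwdef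
  have hw : P w = w := hX.idem u
  have hwne : w ≠ 0 := hPu
  have hwpos : (0:ℝ) < ‖w‖ := norm_pos_iff.mpr hwne
  have hrefl := hX.reflexive
  have hminex : ∀ v : X, P v = v → ∃ mu : X, P mu = v ∧ ∀ x : X, P x = v → I mu ≤ I x :=
    fun v hv => exists_fiber_min P I hrefl h1 h2 h4 v hv
  choose F hF1 hF2 using hminex
  have Fcongr : ∀ (v₁ v₂ : X) (hv₁ : P v₁ = v₁) (hv₂ : P v₂ = v₂),
      v₁ = v₂ → F v₁ hv₁ = F v₂ hv₂ := by
    rintro v₁ v₂ hv₁ hv₂ rfl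
    rfl
  have hsm : ∀ c : ℝ, P (c • w) = c • w := fun c => by rw [map_smul, hw]
  set g : ℕ → X := fun n => F ((n:ℝ) • w) (hsm n) with hg
  have hgP : ∀ n, P (g n) = (n:ℝ) • w := fun n => hF1 _ _
  -- `J (g n) → -∞`
  set z : ℕ → X := fun n => ((n:ℝ))⁻¹ • g n with hz
  have hev : ∀ᶠ n : ℕ in atTop, (1:ℝ) ≤ (n:ℝ) := by
    filter_upwards [Filter.eventually_ge_atTop 1] with n hn
    exact_mod_cast hn
  have hPz : ∀ᶠ n : ℕ in atTop, P (z n) = w := by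
    filter_upwards [hev] with n hn
    have hne : ((n:ℝ)) ≠ 0 := by linarith
    show P (((n:ℝ))⁻¹ • g n) = w
    rw [map_smul, hgP, smul_smul, inv_mul_cancel₀ hne, one_smul]
  have hPz' : Tendsto (fun n => P (z n)) atTop (𝓝 w) :=
    tendsto_const_nhds.congr' (hPz.mono fun n hn => hn.symm)
  have h8' := h8 (fun n => (n:ℝ)) z w tendsto_natCast_atTop_atTop hPz' hwne
  have hgz : ∀ᶠ n : ℕ in atTop, (n:ℝ) • z n = g n := by
    filter_upwards [hev] with n hn
    show (n:ℝ) • (((n:ℝ))⁻¹ • g n) = g n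
    rw [smul_inv_smul₀ (by linarith)]
  have h8'' : Tendsto (fun n => I (g n) / (n:ℝ)^2) atTop atTop :=
    h8'.congr' (hgz.mono fun n hn => by rw [hn])
  have hJle : ∀ᶠ n : ℕ in atTop, Jf P I (g n) ≤ -((n:ℝ)^2) := by
    filter_upwards [h8''.eventually_ge_atTop ((1/2) * ‖w‖^2 + 1), hev] with n hn1 hn2
    have ht2 : (0:ℝ) < (n:ℝ)^2 := by positivity
    have hIge : ((1/2) * ‖w‖^2 + 1) * (n:ℝ)^2 ≤ I (g n) := by
      rw [le_div_iff₀ ht2] at hn1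
      linarith
    have hPx : ‖P (g n)‖^2 = (n:ℝ)^2 * ‖w‖^2 := by
      rw [hgP, norm_smul, Real.norm_eq_abs, abs_of_nonneg (Nat.cast_nonneg n), mul_pow]
    have e1 : Jf P I (g n) = (1/2:ℝ) * ‖P (g n)‖^2 - I (g n) := rfl
    rw [e1, hPx]
    nlinarith
  have hna : ∀ᶠ n : ℕ in atTop, -((n:ℝ)^2) < a := by
    filter_upwards [(tendsto_natCast_atTop_atTop (R := ℝ)).eventually_ge_atTop (|a| + 1)]
      with n hn
    nlinarith [neg_abs_le a, abs_nonneg a]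
  have hnr : ∀ᶠ n : ℕ in atTop, r < ‖P (g n)‖ := by
    have hnn : ∀ n : ℕ, ‖P (g n)‖ = (n:ℝ) * ‖w‖ := fun n => by
      rw [hgP, norm_smul, Real.norm_eq_abs, abs_of_nonneg (Nat.cast_nonneg n)]
    have hnorm : Tendsto (fun n : ℕ => ‖P (g n)‖) atTop atTop := by
      have := (tendsto_natCast_atTop_atTop (R := ℝ)).atTop_mul_const hwpos
      exact this.congr fun n => (hnn n).symm
    exact hnorm.eventually_gt_atTop r
  obtain ⟨n₀, hn₀⟩ := ((hJle.and hna).and hnr).exists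
  have hn₀3 : r < ‖P (g n₀)‖ := hn₀.2
  have hJn₀ : Jf P I (g n₀) < a := lt_of_le_of_lt hn₀.1.1 hn₀.1.2
  -- the path
  set p : unitInterval → X := fun s => F (((s : ℝ) * (n₀:ℝ)) • w) (hsm _) with hp
  have hpcont : Continuous p := by
    apply SeqContinuous.continuous
    intro sk s hsk
    have hcoe : Tendsto (fun k => (sk k : ℝ)) atTop (𝓝 (s:ℝ)) :=
      ((continuous_subtype_val.tendsto s).comp hsk)
    exact min_seq_tendsto P I hrefl h1 h2 h3 h4 h5
      (fun k => ((sk k : ℝ) * (n₀:ℝ)) • w) (((s : ℝ) * (n₀:ℝ)) • w)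
      (fun k => hsm _) ((hcoe.mul_const _).smul_const w)
      (fun k => p (sk k)) (fun k => hF1 _ _) (fun k => hF2 _ _)
      (p s) (hF1 _ _) (hF2 _ _)
  set γ : C(unitInterval, X) := ⟨p, hpcont⟩ with hγ
  have hγapp : ∀ s, γ s = p s := fun s => rfl
  have hγM : ∀ s, γ s ∈ Mset P I := fun s =>
    fiber_min_mem_M P I h1 (hF1 _ _) (hF2 _ _)
  have hγ0 : γ 0 = 0 := by
    rw [hγapp]
    have hx0 : (((0:unitInterval) : ℝ) * (n₀:ℝ)) • w = 0 := by
      norm_num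
    refine fiber_min_unique P I h1 h5 (hF1 _ _) (hF2 _ _) ?_ ?_
    · rw [map_zero, hx0]
    · intro y _
      rw [h1.2.1]
      exact h1.2.2 y
  have hγ1 : γ 1 = g n₀ := by
    rw [hγapp, hp, hg]
    apply Fcongr
    norm_num
  refine ⟨γ, ⟨hγM, hγ0, by rw [hγ1]; exact hn₀3, by rw [hγ1]; exact hJn₀⟩, ?_⟩
  intro s
  rw [hγapp]
  set t' : ℝ := (s : ℝ) * (n₀:ℝ) with ht'
  have ht'0 : 0 ≤ t' := mul_nonneg s.2.1 (Nat.cast_nonneg n₀)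
  set v' : X := p s - t' • u with hv'
  have hPv' : P v' = 0 := by
    rw [hv', map_sub, hF1, map_smul, ← hwdef, sub_self]
  have hsum : t' • u + v' = p s := by
    rw [hv']
    abel
  have := hmax t' ht'0 v' hPv'
  rwa [hsum] at this

theorem Nset_nonempty (P : X →L[ℝ] X) (I : X → ℝ) (hX : SpaceHyp P)
    (h1 : CondI1 I) (h2 : CondI2 P I) (h4 : CondI4 P I) (h8 : CondI8 P I)
    (r a : ℝ) (h6 : CondI6 P I r a)
    {w : X} (hw : P w = w) (hwne : w ≠ 0) : (Nset P I).Nonempty := by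
  classical
  set Cone : Set X := {x | ∃ t : ℝ, 0 ≤ t ∧ P x = t • w} with hCone
  set A : Set ℝ := Jf P I '' Cone with hA
  have hwpos : (0:ℝ) < ‖w‖ := norm_pos_iff.mpr hwne
  have hrpos : 0 < r := h6.1
  set xr : X := (r / ‖w‖) • w with hxr
  have hPxr : P xr = xr := by rw [hxr, map_smul, hw]
  have hxrnorm : ‖xr‖ = r := by
    rw [hxr, norm_smul, Real.norm_eq_abs, abs_of_nonneg (by positivity)]
    field_simp
  have hxrCone : xr ∈ Cone := ⟨r / ‖w‖, by positivity, by rw [hxr, map_smul, hw]⟩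
  have haxr : a ≤ Jf P I xr := by
    rw [h6.2.1]
    exact csInf_le (sphere_bddBelow P I r a h6) ⟨xr, ⟨hPxr, hxrnorm⟩, rfl⟩
  have hAne : A.Nonempty := ⟨Jf P I xr, xr, hxrCone, rfl⟩
  have hAbdd : BddAbove A := by
    by_contra h
    have hex : ∀ n : ℕ, ∃ x, x ∈ Cone ∧ (n:ℝ) < Jf P I x := by
      intro n
      obtain ⟨y, hyA, hgt⟩ := not_bddAbove_iff.mp h (n:ℝ)
      obtain ⟨x, hxC, rfl⟩ := hyA
      exact ⟨x, hxC, hgt⟩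
    choose xs hxsC hxsJ using hex
    choose ts hts0 htsP using fun n => (hxsC n : ∃ t : ℝ, 0 ≤ t ∧ P (xs n) = t • w)
    have hJb : ∀ n, (0:ℝ) ≤ Jf P I (xs n) := fun n =>
      le_trans (Nat.cast_nonneg n) (hxsJ n).le
    obtain ⟨C, hC⟩ := cone_bounded P I h4 h8 hwne xs ts hts0 htsP 0 hJb
    have hub : ∀ n : ℕ, Jf P I (xs n) ≤ (1/2) * (‖P‖ * C)^2 := by
      intro n
      have h7 : ‖P (xs n)‖ ≤ ‖P‖ * C := by
        calc ‖P (xs n)‖ ≤ ‖P‖ * ‖xs n‖ := P.le_opNorm _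
          _ ≤ ‖P‖ * C := mul_le_mul_of_nonneg_left (hC n) (norm_nonneg _)
      have h8' : ‖P (xs n)‖^2 ≤ (‖P‖ * C)^2 := by nlinarith [norm_nonneg (P (xs n))]
      have e1 : Jf P I (xs n) = (1/2:ℝ) * ‖P (xs n)‖^2 - I (xs n) := rfl
      have h9 := h1.2.2 (xs n)
      rw [e1]
      nlinarith
    obtain ⟨n, hn⟩ := exists_nat_gt ((1/2) * (‖P‖ * C)^2)
    exact absurd (hub n) (not_le.mpr (lt_trans hn (hxsJ n)))
  set sstar : ℝ := sSup A with hsstar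
  have hasstar : a ≤ sstar := le_trans haxr (le_csSup hAbdd ⟨xr, hxrCone, rfl⟩)
  have hconeJ : ∀ x ∈ Cone, Jf P I x ≤ sstar := fun x hx => le_csSup hAbdd ⟨x, hx, rfl⟩
  obtain ⟨sq, hsqmono, hsqtend, hsqmem⟩ := exists_seq_tendsto_sSup hAne hAbdd
  have hex2 : ∀ n, ∃ x, x ∈ Cone ∧ Jf P I x = sq n := by
    intro n
    obtain ⟨x, hx, hxe⟩ := hsqmem n
    exact ⟨x, hx, hxe⟩
  choose xs hxsC hxsJ using hex2
  choose ts hts0 htsP using fun n => (hxsC n : ∃ t : ℝ, 0 ≤ t ∧ P (xs n) = t • w)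
  have hJlb : ∀ n, sq 0 ≤ Jf P I (xs n) := fun n => by
    rw [hxsJ]
    exact hsqmono (Nat.zero_le n)
  obtain ⟨C, hC⟩ := cone_bounded P I h4 h8 hwne xs ts hts0 htsP (sq 0) hJlb
  have htsb : ∀ n, ts n ∈ Set.Icc (0:ℝ) (‖P‖ * C / ‖w‖) := by
    intro n
    refine ⟨hts0 n, ?_⟩
    have h7 : ts n * ‖w‖ = ‖P (xs n)‖ := by
      rw [htsP, norm_smul, Real.norm_eq_abs, abs_of_nonneg (hts0 n)]
    have h8' : ‖P (xs n)‖ ≤ ‖P‖ * C := by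
      calc ‖P (xs n)‖ ≤ ‖P‖ * ‖xs n‖ := P.le_opNorm _
        _ ≤ ‖P‖ * C := mul_le_mul_of_nonneg_left (hC n) (norm_nonneg _)
    rw [le_div_iff₀ hwpos]
    linarith
  obtain ⟨tstar, htmem, τ, hτmono, hτconv⟩ := isCompact_Icc.tendsto_subseq htsb
  have hPconv : Tendsto (fun k => P ((xs ∘ τ) k)) atTop (𝓝 (tstar • w)) :=
    (hτconv.smul_const w).congr fun k => (htsP (τ k)).symm
  have hCb : ∀ k, ‖(xs ∘ τ) k‖ ≤ C := fun k => hC (τ k)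
  obtain ⟨ms, hms, l, hPl, hTC⟩ := exists_TConv_subseq P hX.reflexive (xs ∘ τ) C hCb hPconv
  have hJτ : Tendsto (fun k => Jf P I (((xs ∘ τ) ∘ ms) k)) atTop (𝓝 sstar) := by
    have h7 : Tendsto (fun k => sq (τ (ms k))) atTop (𝓝 sstar) :=
      hsqtend.comp ((hτmono.tendsto_atTop).comp hms.tendsto_atTop)
    exact h7.congr fun k => (hxsJ (τ (ms k))).symm
  have htconv2 : Tendsto (fun k => ts (τ (ms k))) atTop (𝓝 tstar) :=
    hτconv.comp hms.tendsto_atTop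
  have hItend : Tendsto (fun k => I (((xs ∘ τ) ∘ ms) k)) atTop
      (𝓝 ((1/2) * tstar^2 * ‖w‖^2 - sstar)) := by
    have h7 : ∀ k, I (((xs ∘ τ) ∘ ms) k) =
        (1/2) * (ts (τ (ms k)))^2 * ‖w‖^2 - Jf P I (((xs ∘ τ) ∘ ms) k) := by
      intro k
      have e1 : Jf P I (xs (τ (ms k))) =
          (1/2:ℝ) * ‖P (xs (τ (ms k)))‖^2 - I (xs (τ (ms k))) := rfl
      have hPx : ‖P (xs (τ (ms k)))‖^2 = (ts (τ (ms k)))^2 * ‖w‖^2 := by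
        rw [htsP, norm_smul, Real.norm_eq_abs, abs_of_nonneg (hts0 _), mul_pow]
      rw [hPx] at e1
      show I (xs (τ (ms k))) = (1/2) * (ts (τ (ms k)))^2 * ‖w‖^2 - Jf P I (xs (τ (ms k)))
      rw [e1]
      ring
    have h8' : Tendsto (fun k => (1/2) * (ts (τ (ms k)))^2 * ‖w‖^2 -
        Jf P I (((xs ∘ τ) ∘ ms) k)) atTop (𝓝 ((1/2) * tstar^2 * ‖w‖^2 - sstar)) :=
      (((htconv2.pow 2).const_mul (1/2:ℝ)).mul_const (‖w‖^2)).sub hJτ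
    exact h8'.congr fun k => (h7 k).symm
  have hIl : I l ≤ (1/2) * tstar^2 * ‖w‖^2 - sstar := by
    have h7 := h2 ((xs ∘ τ) ∘ ms) l hTC
    rwa [hItend.liminf_eq] at h7
  have htstar0 : 0 ≤ tstar := htmem.1
  have hPl2 : ‖P l‖^2 = tstar^2 * ‖w‖^2 := by
    rw [hPl, norm_smul, Real.norm_eq_abs, abs_of_nonneg htstar0, mul_pow]
  have hJl : sstar ≤ Jf P I l := by
    have e1 : Jf P I l = (1/2:ℝ) * ‖P l‖^2 - I l := rfl
    rw [e1, hPl2]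
    linarith
  have hlCone : l ∈ Cone := ⟨tstar, htstar0, hPl⟩
  have hJleq : Jf P I l = sstar := le_antisymm (hconeJ l hlCone) hJl
  have htpos : 0 < tstar := by
    rcases lt_or_eq_of_le htstar0 with h | h
    · exact h
    · exfalso
      have hPl0 : P l = 0 := by rw [hPl, ← h, zero_smul]
      have e1 : Jf P I l = (1/2:ℝ) * ‖P l‖^2 - I l := rfl
      rw [hPl0, hJleq] at e1
      simp only [norm_zero] at e1
      have h9 := h1.2.2 l
      have h62 := h6.2.2
      nlinarith
  obtain ⟨D, hD1, hD2, hD3⟩ := hX.exists_qderiv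
  have hIdiff : ∀ x : X, HasFDerivAt I (fderiv ℝ I x) x := fun x =>
    ((h1.1.differentiable one_ne_zero) x).hasFDerivAt
  have hJd : ∀ x : X, HasFDerivAt (Jf P I) (D x - fderiv ℝ I x) x := fun x =>
    (hD1 x).sub (hIdiff x)
  have hfJ : ∀ x : X, fderiv ℝ (Jf P I) x = D x - fderiv ℝ I x := fun x => (hJd x).fderiv
  have hcrit : ∀ v : X, P v = 0 → fderiv ℝ (Jf P I) l v = 0 := by
    intro v hv
    rw [hfJ]
    apply fderiv_zero_of_line_max (Jf P I) (hJd l) v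
    intro s _ _
    rw [hJleq]
    exact hconeJ _ ⟨tstar, htstar0, by rw [map_add, map_smul, hv, smul_zero, add_zero, hPl]⟩
  have hcritl : fderiv ℝ (Jf P I) l l = 0 := by
    rw [hfJ]
    apply fderiv_zero_of_line_max (Jf P I) (hJd l) l
    intro s hs1 _
    rw [hJleq]
    refine hconeJ _ ⟨(1 + s) * tstar, by nlinarith, ?_⟩
    rw [map_add, map_smul, hPl, smul_smul, ← add_smul]
    congr 1
    ring
  refine ⟨l, ⟨?_, hcritl, hcrit⟩⟩
  rw [hPl]
  exact smul_ne_zero (ne_of_gt htpos) hwne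

end Aux

/-- (cf. Theorem 4.6 d)).
Under (I1)–(I9) and coercivity of `J` on `N`: `c_M ≤ c_N`, and if the mountain pass level
`c_M` is achieved by a critical point of `J` then `c_M = c_N`. -/
theorem statement9 (P : X →L[ℝ] X) (I : X → ℝ) (hX : SpaceHyp P)
    (h1 : CondI1 I) (h2 : CondI2 P I) (h3 : CondI3 P I) (h4 : CondI4 P I) (h5 : CondI5 P I)
    (r a : ℝ) (h6 : CondI6 P I r a) (h7 : CondI7 P I a) (h8 : CondI8 P I) (h9 : CondI9 P I)
    (hcoercive : ∀ u : ℕ → X, (∀ n, u n ∈ Nset P I) →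
      Tendsto (fun n => ‖u n‖) atTop atTop → Tendsto (fun n => Jf P I (u n)) atTop atTop) :
    cMP P I r a ≤ cNP P I ∧
    ((∃ u : X, fderiv ℝ (Jf P I) u = 0 ∧ Jf P I u = cMP P I r a) →
      cMP P I r a = cNP P I) := by
  have hemptycase : ¬(Nset P I).Nonempty → cMP P I r a = 0 ∧ cNP P I = 0 := by
    intro hN
    have hNe : Nset P I = ∅ := Set.not_nonempty_iff_eq_empty.mp hN
    have hΓe : GammaSet P I r a = ∅ := by
      rw [Set.eq_empty_iff_forall_notMem]
      intro γ hγ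
      apply hN
      have hPne : P (γ 1) ≠ 0 := by
        intro h0
        have h7 := hγ.2.2.1
        rw [h0] at h7
        simp only [norm_zero] at h7
        linarith [h6.1]
      exact Nset_nonempty P I hX h1 h2 h4 h8 r a h6 (hX.idem (γ 1)) hPne
    constructor
    · rw [cMP, hΓe]
      simp [Real.sInf_empty]
    · rw [cNP, hNe]
      simp [Real.sInf_empty]
  have hpartA : cMP P I r a ≤ cNP P I := by
    by_cases hN : (Nset P I).Nonempty
    · have key : ∀ u ∈ Nset P I, cMP P I r a ≤ Jf P I u := by
        intro u hu
        obtain ⟨hM, hIu, hJpos, hmax⟩ := Nset_props P I hX h1 h9 hu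
        obtain ⟨γ, hγΓ, hγle⟩ := exists_path P I hX h1 h2 h3 h4 h5 h8 r a hu.1 hmax
        have hbddB : BddBelow ((fun γ' : C(unitInterval, X) =>
            sSup (Set.range fun t => Jf P I (γ' t))) '' GammaSet P I r a) := by
          refine ⟨0, ?_⟩
          rintro y ⟨γ', hγ', rfl⟩
          have hbddA : BddAbove (Set.range fun t => Jf P I (γ' t)) :=
            (isCompact_range ((Jf_continuous P I h1).comp γ'.continuous)).bddAbove
          have h0' : Jf P I (γ' 0) = 0 := by
            rw [hγ'.2.1]
            show (1/2:ℝ) * ‖P 0‖^2 - I 0 = 0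
            rw [map_zero, h1.2.1]
            simp
          have h7 := le_csSup hbddA (Set.mem_range_self (0:unitInterval))
          rw [h0'] at h7
          exact h7
        have hle1 : cMP P I r a ≤ sSup (Set.range fun t => Jf P I (γ t)) :=
          csInf_le hbddB ⟨γ, hγΓ, rfl⟩
        have hle2 : sSup (Set.range fun t => Jf P I (γ t)) ≤ Jf P I u :=
          Real.sSup_le (by rintro y ⟨t, rfl⟩; exact hγle t) hJpos.le
        exact le_trans hle1 hle2
      exact le_csInf (hN.image _) (by rintro b ⟨u, hu, rfl⟩; exact key u hu)
    · rw [(hemptycase hN).1, (hemptycase hN).2]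
  refine ⟨hpartA, ?_⟩
  rintro ⟨u₀, hcrit, hval⟩
  by_cases hN : (Nset P I).Nonempty
  · obtain ⟨u, hu⟩ := hN
    obtain ⟨hM, hIu, hJpos, hmax⟩ := Nset_props P I hX h1 h9 hu
    obtain ⟨γ, hγΓ, -⟩ := exists_path P I hX h1 h2 h3 h4 h5 h8 r a hu.1 hmax
    have hcMa : a ≤ cMP P I r a := by
      refine le_csInf ⟨sSup (Set.range fun t => Jf P I (γ t)), ⟨γ, hγΓ, rfl⟩⟩ ?_
      rintro b ⟨γ', hγ', rfl⟩
      exact gamma_sup_ge P I hX h1 h5 r a h6 hγ'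
    have hPu₀ : P u₀ ≠ 0 := by
      intro h0
      have e1 : Jf P I u₀ = (1/2:ℝ) * ‖P u₀‖^2 - I u₀ := rfl
      rw [h0] at e1
      simp only [norm_zero] at e1
      have h9' := h1.2.2 u₀
      have h62 := h6.2.2
      rw [hval] at e1
      nlinarith [hcMa]
    have hu₀N : u₀ ∈ Nset P I :=
      ⟨hPu₀, by rw [hcrit]; rfl, fun v _ => by rw [hcrit]; rfl⟩
    have hNbdd : BddBelow (Jf P I '' Nset P I) := by
      refine ⟨0, ?_⟩
      rintro y ⟨x, hx, rfl⟩
      exact (Nset_props P I hX h1 h9 hx).2.2.1.le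
    have h2' : cNP P I ≤ cMP P I r a := by
      rw [← hval]
      exact csInf_le hNbdd ⟨u₀, hu₀N, rfl⟩
    exact le_antisymm hpartA h2'
  · rw [(hemptycase hN).1, (hemptycase hN).2]

end
end

section
/- Let F : ℝ → ℝ be differentiable with F(0) = 0, f := F', f(u) = o(u) as u → 0, and suppose the map u ↦ f(u)/|u| is strictly increasing on (−∞,0) and strictly increasing on (0,∞). Then for all t ≥ 0 and all u, v ∈ ℝ: ((t²−1)/2)·f(u)·u + t·f(u)·v + F(u) − F(tu+v) ≤ 0, with strict inequality whenever u ≠ tu+v. -/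
open Asymptotics

noncomputable section

open Filter


lemma deriv_zero_of (F : ℝ → ℝ)
    (hsmall : (fun u => deriv F u) =o[nhds (0 : ℝ)] fun u : ℝ => u) :
    deriv F 0 = 0 := by
  have h := (hsmall.def one_pos).self_of_nhds
  simpa using h

lemma div_nonneg_of (F : ℝ → ℝ)
    (hsmall : (fun u => deriv F u) =o[nhds (0 : ℝ)] fun u : ℝ => u)
    (hmono_pos : StrictMonoOn (fun u : ℝ => deriv F u / |u|) (Set.Ioi 0))
    {u : ℝ} (hu : 0 < u) : 0 ≤ deriv F u / u := by
  have hlim : Filter.Tendsto (fun s => deriv F s / s) (nhdsWithin 0 (Set.Ioi 0)) (nhds 0) :=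
    hsmall.tendsto_div_nhds_zero.mono_left nhdsWithin_le_nhds
  refine le_of_tendsto hlim ?_
  filter_upwards [self_mem_nhdsWithin,
    eventually_nhdsWithin_of_eventually_nhds (eventually_lt_nhds hu)] with s hs hsu
  have := hmono_pos hs (Set.mem_Ioi.2 hu) hsu
  simp only at this
  rw [abs_of_pos hs, abs_of_pos hu] at this
  exact this.le

lemma div_pos_of (F : ℝ → ℝ)
    (hsmall : (fun u => deriv F u) =o[nhds (0 : ℝ)] fun u : ℝ => u)
    (hmono_pos : StrictMonoOn (fun u : ℝ => deriv F u / |u|) (Set.Ioi 0))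
    {u : ℝ} (hu : 0 < u) : 0 < deriv F u / u := by
  have h1 : 0 ≤ deriv F (u/2) / (u/2) := div_nonneg_of F hsmall hmono_pos (by linarith)
  have h2 := hmono_pos (Set.mem_Ioi.2 (by linarith : (0:ℝ) < u/2)) (Set.mem_Ioi.2 hu)
    (by linarith)
  simp only at h2
  rw [abs_of_pos (by linarith : (0:ℝ) < u/2), abs_of_pos hu] at h2
  linarith

lemma div_nonpos_of (F : ℝ → ℝ)
    (hsmall : (fun u => deriv F u) =o[nhds (0 : ℝ)] fun u : ℝ => u)
    (hmono_neg : StrictMonoOn (fun u : ℝ => deriv F u / |u|) (Set.Iio 0))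
    {u : ℝ} (hu : u < 0) : deriv F u / |u| ≤ 0 := by
  have hlim0 : Filter.Tendsto (fun s => deriv F s / s) (nhdsWithin 0 (Set.Iio 0)) (nhds 0) :=
    hsmall.tendsto_div_nhds_zero.mono_left nhdsWithin_le_nhds
  have hlim : Filter.Tendsto (fun s => deriv F s / |s|) (nhdsWithin 0 (Set.Iio 0)) (nhds 0) := by
    have : Filter.Tendsto (fun s => -(deriv F s / s)) (nhdsWithin 0 (Set.Iio 0)) (nhds 0) := by
      simpa using hlim0.neg
    refine this.congr' ?_
    filter_upwards [self_mem_nhdsWithin] with s hs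
    rw [abs_of_neg hs, div_neg]
  refine ge_of_tendsto hlim ?_
  filter_upwards [self_mem_nhdsWithin,
    eventually_nhdsWithin_of_eventually_nhds (eventually_gt_nhds hu)] with s hs hsu
  exact (hmono_neg (Set.mem_Iio.2 hu) hs hsu).le

lemma div_neg_of (F : ℝ → ℝ)
    (hsmall : (fun u => deriv F u) =o[nhds (0 : ℝ)] fun u : ℝ => u)
    (hmono_neg : StrictMonoOn (fun u : ℝ => deriv F u / |u|) (Set.Iio 0))
    {u : ℝ} (hu : u < 0) : deriv F u / |u| < 0 := by
  have h1 : deriv F (u/2) / |u/2| ≤ 0 := div_nonpos_of F hsmall hmono_neg (by linarith)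
  have h2 := hmono_neg (Set.mem_Iio.2 hu) (Set.mem_Iio.2 (by linarith : u/2 < 0))
    (by linarith)
  simp only at h2
  linarith

lemma deriv_pos_of (F : ℝ → ℝ) (hpos : ∀ s : ℝ, 0 < s → 0 < deriv F s / s)
    {x : ℝ} (hx : 0 < x) : 0 < deriv F x := by
  have := mul_pos (hpos x hx) hx
  rwa [div_mul_cancel₀ _ (ne_of_gt hx)] at this

lemma deriv_neg_of (F : ℝ → ℝ) (hneg : ∀ s : ℝ, s < 0 → deriv F s / |s| < 0)
    {x : ℝ} (hx : x < 0) : deriv F x < 0 := by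
  have h := hneg x hx
  rw [abs_of_neg hx] at h
  have := mul_neg_of_neg_of_pos h (by linarith : (0:ℝ) < -x)
  rwa [div_mul_cancel₀ _ (by linarith : (-x) ≠ 0)] at this

lemma F_pos_aux (F : ℝ → ℝ) (hF : Differentiable ℝ F) (hF0 : F 0 = 0)
    (hpos : ∀ s : ℝ, 0 < s → 0 < deriv F s / s)
    (hneg : ∀ s : ℝ, s < 0 → deriv F s / |s| < 0)
    {u : ℝ} (hu : u ≠ 0) : 0 < F u := by
  rcases hu.lt_or_gt with h | h
  · have hanti : StrictAntiOn F (Set.Icc u 0) := by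
      refine strictAntiOn_of_deriv_neg (convex_Icc u 0) hF.continuous.continuousOn ?_
      intro x hx
      rw [interior_Icc] at hx
      exact deriv_neg_of F hneg hx.2
    have := hanti (Set.mem_Icc.2 ⟨le_refl u, h.le⟩) (Set.mem_Icc.2 ⟨h.le, le_refl 0⟩) h
    simpa [hF0] using this
  · have hmono : StrictMonoOn F (Set.Icc 0 u) := by
      refine strictMonoOn_of_deriv_pos (convex_Icc 0 u) hF.continuous.continuousOn ?_
      intro x hx
      rw [interior_Icc] at hx
      exact deriv_pos_of F hpos hx.1
    have := hmono (Set.mem_Icc.2 ⟨le_refl 0, h.le⟩) (Set.mem_Icc.2 ⟨h.le, le_refl u⟩) h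
    simpa [hF0] using this

lemma quad_hasDeriv (c : ℝ) (s : ℝ) :
    HasDerivAt (fun s : ℝ => s ^ 2 * c / 2) (s * c) s := by
  have h2 : HasDerivAt (fun s : ℝ => s ^ 2 * c / 2) (2 * s ^ 1 * (c / 2)) s := by
    simpa [mul_div_assoc] using (hasDerivAt_pow 2 s).mul_const (c / 2)
  convert h2 using 1
  ring

lemma F_lt_aux (F : ℝ → ℝ) (hF : Differentiable ℝ F) (hF0 : F 0 = 0)
    (hmono_neg : StrictMonoOn (fun u : ℝ => deriv F u / |u|) (Set.Iio 0))
    (hmono_pos : StrictMonoOn (fun u : ℝ => deriv F u / |u|) (Set.Ioi 0))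
    {u : ℝ} (hu : u ≠ 0) : F u < deriv F u * u / 2 := by
  set c := deriv F u / u with hc
  have hq : ∀ s : ℝ, HasDerivAt (fun s : ℝ => F s - s ^ 2 * c / 2) (deriv F s - s * c) s :=
    fun s => (hF s).hasDerivAt.sub (quad_hasDeriv c s)
  have hcont : Continuous (fun s : ℝ => F s - s ^ 2 * c / 2) :=
    hF.continuous.sub (by continuity)
  have hkey : F u - u ^ 2 * c / 2 < F 0 - 0 ^ 2 * c / 2 := by
    rcases hu.lt_or_gt with h | h
    · -- u < 0 : function strictly increasing on [u,0]
      have hmono : StrictMonoOn (fun s : ℝ => F s - s ^ 2 * c / 2) (Set.Icc u 0) := by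
        refine strictMonoOn_of_deriv_pos (convex_Icc u 0) hcont.continuousOn ?_
        intro x hx
        rw [interior_Icc] at hx
        rw [(hq x).deriv]
        have hlt := hmono_neg (Set.mem_Iio.2 h) (Set.mem_Iio.2 hx.2) hx.1
        simp only [abs_of_neg h, abs_of_neg hx.2] at hlt
        -- deriv F u / (-u) < deriv F x / (-x)
        have hx0 : (0:ℝ) < -x := by linarith [hx.2]
        have := mul_lt_mul_of_pos_right hlt hx0
        rw [div_mul_cancel₀ _ (by linarith : (-x) ≠ 0)] at this
        -- deriv F u / (-u) * (-x) < deriv F x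
        have hcx : c * x < deriv F x := by
          rw [hc]
          have heq : deriv F u / -u * -x = deriv F u / u * x := by
            rw [div_neg, neg_mul, mul_neg, neg_neg]
          linarith [heq ▸ this]
        linarith
      exact hmono (Set.mem_Icc.2 ⟨le_refl u, h.le⟩) (Set.mem_Icc.2 ⟨h.le, le_refl 0⟩) h
    · have hanti : StrictAntiOn (fun s : ℝ => F s - s ^ 2 * c / 2) (Set.Icc 0 u) := by
        refine strictAntiOn_of_deriv_neg (convex_Icc 0 u) hcont.continuousOn ?_
        intro x hx
        rw [interior_Icc] at hx
        rw [(hq x).deriv]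
        have hlt := hmono_pos (Set.mem_Ioi.2 hx.1) (Set.mem_Ioi.2 h) hx.2
        simp only [abs_of_pos h, abs_of_pos hx.1] at hlt
        have := mul_lt_mul_of_pos_right hlt hx.1
        rw [div_mul_cancel₀ _ (ne_of_gt hx.1)] at this
        have hcx : deriv F x < c * x := by rw [hc]; linarith [this]
        linarith
      exact hanti (Set.mem_Icc.2 ⟨le_refl 0, h.le⟩) (Set.mem_Icc.2 ⟨h.le, le_refl u⟩) h
  have huc : u ^ 2 * c = deriv F u * u := by
    rw [hc]; field_simp
  rw [hF0] at hkey
  nlinarith [hkey]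
lemma F_lower (F : ℝ → ℝ) (hF : Differentiable ℝ F)
    (hmono_pos : StrictMonoOn (fun u : ℝ => deriv F u / |u|) (Set.Ioi 0))
    {u : ℝ} (hu : 0 < u) :
    ∀ w, 2 * u ≤ w →
      deriv F (2 * u) / (2 * u) * w ^ 2 / 2
        + (F (2 * u) - deriv F (2 * u) / (2 * u) * (2 * u) ^ 2 / 2) ≤ F w := by
  intro w hw
  set c := deriv F (2 * u) / (2 * u) with hc
  have hq : ∀ s : ℝ, HasDerivAt (fun s : ℝ => F s - s ^ 2 * c / 2) (deriv F s - s * c) s :=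
    fun s => (hF s).hasDerivAt.sub (quad_hasDeriv c s)
  have hmono : MonotoneOn (fun s : ℝ => F s - s ^ 2 * c / 2) (Set.Icc (2 * u) w) := by
    refine monotoneOn_of_deriv_nonneg (convex_Icc _ _)
      (hF.continuous.sub (by continuity)).continuousOn
      (fun x _ => ((hq x).differentiableAt).differentiableWithinAt) ?_
    intro x hx
    rw [interior_Icc] at hx
    rw [(hq x).deriv]
    have h2u : (0:ℝ) < 2 * u := by linarith
    have hx0 : (0:ℝ) < x := lt_trans h2u hx.1
    have hlt := hmono_pos (Set.mem_Ioi.2 h2u) (Set.mem_Ioi.2 hx0) hx.1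
    simp only [abs_of_pos h2u, abs_of_pos hx0] at hlt
    have := mul_lt_mul_of_pos_right hlt hx0
    rw [div_mul_cancel₀ _ (ne_of_gt hx0)] at this
    rw [hc]
    linarith
  have := hmono (Set.mem_Icc.2 ⟨le_refl _, hw⟩) (Set.mem_Icc.2 ⟨hw, le_refl w⟩) hw
  simp only at this
  linarith

lemma h_hasDeriv (F : ℝ → ℝ) (hF : Differentiable ℝ F) (u v : ℝ) (t : ℝ) :
    HasDerivAt
      (fun t : ℝ => (t ^ 2 - 1) / 2 * (deriv F u * u) + t * (deriv F u * v) + F u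
        - F (t * u + v))
      (deriv F u * (t * u + v) - deriv F (t * u + v) * u) t := by
  have h1 : HasDerivAt (fun t : ℝ => (t ^ 2 - 1) / 2 * (deriv F u * u))
      (t * (deriv F u * u)) t := by
    have := (((hasDerivAt_pow 2 t).sub_const 1).div_const 2).mul_const (deriv F u * u)
    exact this.congr_deriv (by ring)
  have h2 : HasDerivAt (fun t : ℝ => t * (deriv F u * v)) (deriv F u * v) t := by
    simpa using (hasDerivAt_id t).mul_const (deriv F u * v)
  have h3 : HasDerivAt (fun t : ℝ => t * u + v) u t := by
    simpa using ((hasDerivAt_id t).mul_const u).add_const v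
  have h4 : HasDerivAt (fun t : ℝ => F (t * u + v)) (deriv F (t * u + v) * u) t :=
    (hF (t * u + v)).hasDerivAt.comp t h3
  have := ((h1.add h2).add_const (F u)).sub h4
  exact this.congr_deriv (by ring)

lemma special (F : ℝ → ℝ) (hF : Differentiable ℝ F)
    (hmono_pos : StrictMonoOn (fun u : ℝ => deriv F u / |u|) (Set.Ioi 0))
    {u : ℝ} (hu : 0 < u) {t₀ : ℝ} (ht₀ : 0 ≤ t₀) (hne : t₀ ≠ 1) :
    (t₀ ^ 2 - 1) / 2 * (deriv F u * u) + F u - F (t₀ * u) < 0 := by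
  have hg : ∀ t : ℝ, HasDerivAt
      (fun t : ℝ => (t ^ 2 - 1) / 2 * (deriv F u * u) + F u - F (t * u))
      (deriv F u * (t * u) - deriv F (t * u) * u) t := by
    intro t
    have := h_hasDeriv F hF u 0 t
    simpa using this
  have hcont : Continuous (fun t : ℝ => (t ^ 2 - 1) / 2 * (deriv F u * u) + F u - F (t * u)) :=
    Differentiable.continuous (fun t => (hg t).differentiableAt)
  have hg1 : (1 ^ 2 - 1 : ℝ) / 2 * (deriv F u * u) + F u - F (1 * u) = 0 := by
    norm_num
  rcases lt_or_gt_of_ne hne with h1 | h1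
  · -- t₀ < 1 : strictly increasing on [t₀, 1]
    have hmono : StrictMonoOn (fun t : ℝ => (t ^ 2 - 1) / 2 * (deriv F u * u) + F u - F (t * u))
        (Set.Icc t₀ 1) := by
      refine strictMonoOn_of_deriv_pos (convex_Icc _ _) hcont.continuousOn ?_
      intro x hx
      rw [interior_Icc] at hx
      rw [(hg x).deriv]
      have hx0 : 0 < x := lt_of_le_of_lt ht₀ hx.1
      have hxu : 0 < x * u := mul_pos hx0 hu
      have hxu2 : x * u < u := by nlinarith [hx.2]
      have hlt := hmono_pos (Set.mem_Ioi.2 hxu) (Set.mem_Ioi.2 hu) hxu2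
      simp only [abs_of_pos hxu, abs_of_pos hu] at hlt
      have h2 := mul_lt_mul_of_pos_right hlt hxu
      rw [div_mul_cancel₀ _ (ne_of_gt hxu)] at h2
      -- deriv F (x*u) < deriv F u / u * (x * u) = x * deriv F u
      have heq : deriv F u / u * (x * u) = x * deriv F u := by
        field_simp
      rw [heq] at h2
      nlinarith [h2, hu]
    have := hmono (Set.mem_Icc.2 ⟨le_refl _, h1.le⟩) (Set.mem_Icc.2 ⟨h1.le, le_refl 1⟩) h1
    simp only at this
    linarith [hg1 ▸ this]
  · -- 1 < t₀ : strictly decreasing on [1, t₀]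
    have hanti : StrictAntiOn (fun t : ℝ => (t ^ 2 - 1) / 2 * (deriv F u * u) + F u - F (t * u))
        (Set.Icc 1 t₀) := by
      refine strictAntiOn_of_deriv_neg (convex_Icc _ _) hcont.continuousOn ?_
      intro x hx
      rw [interior_Icc] at hx
      rw [(hg x).deriv]
      have hx0 : (0:ℝ) < x := lt_trans one_pos hx.1
      have hxu : 0 < x * u := mul_pos hx0 hu
      have hxu2 : u < x * u := by nlinarith [hx.1]
      have hlt := hmono_pos (Set.mem_Ioi.2 hu) (Set.mem_Ioi.2 hxu) hxu2
      simp only [abs_of_pos hxu, abs_of_pos hu] at hlt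
      have h2 := mul_lt_mul_of_pos_right hlt hxu
      rw [div_mul_cancel₀ _ (ne_of_gt hxu)] at h2
      have heq : deriv F u / u * (x * u) = x * deriv F u := by
        field_simp
      rw [heq] at h2
      nlinarith [h2, hu]
    have := hanti (Set.mem_Icc.2 ⟨le_refl _, h1.le⟩) (Set.mem_Icc.2 ⟨h1.le, le_refl t₀⟩) h1
    simp only at this
    linarith [hg1 ▸ this]

lemma quad_tendsto_atBot {a b d : ℝ} (ha : a < 0) :
    Tendsto (fun t : ℝ => a * t ^ 2 + b * t + d) atTop atBot := by
  have h1 : Tendsto (fun t : ℝ => a * t + b) atTop atBot := by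
    apply Filter.tendsto_atBot_add_const_right
    exact tendsto_id.const_mul_atTop_of_neg ha
  have h2 : Tendsto (fun t : ℝ => t * (a * t + b)) atTop atBot :=
    tendsto_id.atTop_mul_atBot₀ h1
  have h3 : Tendsto (fun t : ℝ => t * (a * t + b) + d) atTop atBot :=
    Filter.tendsto_atBot_add_const_right _ d h2
  refine h3.congr' ?_
  filter_upwards with t
  ring

lemma key_pos (F : ℝ → ℝ) (hF : Differentiable ℝ F) (hF0 : F 0 = 0)
    (hsmall : (fun u => deriv F u) =o[nhds (0 : ℝ)] fun u : ℝ => u)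
    (hmono_neg : StrictMonoOn (fun u : ℝ => deriv F u / |u|) (Set.Iio 0))
    (hmono_pos : StrictMonoOn (fun u : ℝ => deriv F u / |u|) (Set.Ioi 0))
    {u : ℝ} (hu : 0 < u) {t₀ : ℝ} (ht₀ : 0 ≤ t₀) (v : ℝ)
    (hne : u ≠ t₀ * u + v) :
    (t₀ ^ 2 - 1) / 2 * (deriv F u * u) + t₀ * (deriv F u * v) + F u - F (t₀ * u + v) < 0 := by
  have hpos : ∀ s : ℝ, 0 < s → 0 < deriv F s / s := fun s hs => div_pos_of F hsmall hmono_pos hs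
  have hnegd : ∀ s : ℝ, s < 0 → deriv F s / |s| < 0 := fun s hs => div_neg_of F hsmall hmono_neg hs
  have hfu : 0 < deriv F u := deriv_pos_of F hpos hu
  have hFu : F u < deriv F u * u / 2 := F_lt_aux F hF hF0 hmono_neg hmono_pos (ne_of_gt hu)
  have hFnonneg : ∀ w : ℝ, 0 ≤ F w := by
    intro w
    rcases eq_or_ne w 0 with rfl | hw
    · simp [hF0]
    · exact (F_pos_aux F hF hF0 hpos hnegd hw).le
  set h : ℝ → ℝ := fun t =>
    (t ^ 2 - 1) / 2 * (deriv F u * u) + t * (deriv F u * v) + F u - F (t * u + v) with hdefh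
  clear_value h
  suffices hsuff : h t₀ < 0 by
    have := hsuff
    rw [hdefh] at this
    simpa using this
  have hD : ∀ t : ℝ, HasDerivAt h (deriv F u * (t * u + v) - deriv F (t * u + v) * u) t :=
    fun t => by rw [hdefh]; exact h_hasDeriv F hF u v t
  have hcont : Continuous h := Differentiable.continuous (fun t => (hD t).differentiableAt)
  -- quadratic upper bound
  set c := deriv F (2 * u) / (2 * u) with hc
  have hcgt : deriv F u / u < c := by
    have := hmono_pos (Set.mem_Ioi.2 hu) (Set.mem_Ioi.2 (by linarith : (0:ℝ) < 2 * u))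
      (by linarith)
    simpa [abs_of_pos hu, abs_of_pos (by linarith : (0:ℝ) < 2*u)] using this
  set K : ℝ := c * (2 * u) ^ 2 / 2 - F (2 * u) with hK
  have hFlow : ∀ w, 2 * u ≤ w → c * w ^ 2 / 2 - K ≤ F w := by
    intro w hw
    have := F_lower F hF hmono_pos hu w hw
    rw [hK, hc]
    linarith [this]
  set a : ℝ := (deriv F u * u - c * u ^ 2) / 2 with ha
  set b : ℝ := deriv F u * v - c * u * v with hb
  set d : ℝ := -(deriv F u * u) / 2 + F u - c * v ^ 2 / 2 + K with hd
  clear_value c K a b d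
  have haneg : a < 0 := by
    have := mul_lt_mul_of_pos_right hcgt (by positivity : (0:ℝ) < u ^ 2)
    rw [ha]
    have heq : deriv F u / u * u ^ 2 = deriv F u * u := by field_simp
    nlinarith [heq ▸ this]
  have hub : ∀ t : ℝ, (2 * u - v) / u ≤ t → h t ≤ a * t ^ 2 + b * t + d := by
    intro t ht
    have hwge : 2 * u ≤ t * u + v := by
      rw [div_le_iff₀ hu] at ht
      linarith
    have := hFlow _ hwge
    rw [hdefh]
    simp only
    rw [ha, hb, hd]
    nlinarith [this]
  -- find T beyond t₀ where h is below h t₀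
  have htend : Tendsto (fun t : ℝ => a * t ^ 2 + b * t + d) atTop atBot := quad_tendsto_atBot haneg
  obtain ⟨T, hT1, hT2, hT3⟩ :=
    ((htend.eventually (eventually_lt_atBot (h t₀))).and
      ((eventually_ge_atTop ((2 * u - v) / u)).and (eventually_gt_atTop t₀))).exists
  have hhT : h T < h t₀ := lt_of_le_of_lt (hub T hT2) hT1
  have hT0 : (0:ℝ) ≤ T := le_trans ht₀ hT3.le
  obtain ⟨ts, htsmem, htsmax⟩ := (isCompact_Icc).exists_isMaxOn (Set.nonempty_Icc.2 hT0)
    hcont.continuousOn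
  have hmax0 : h t₀ ≤ h ts := htsmax (Set.mem_Icc.2 ⟨ht₀, hT3.le⟩)
  have htsT : ts ≠ T := by
    intro hEq
    rw [hEq] at hmax0
    linarith
  rcases eq_or_lt_of_le (Set.mem_Icc.1 htsmem).1 with h0 | hts0
  · -- ts = 0
    have hzero : h 0 < 0 := by
      rw [hdefh]
      simp only
      norm_num
      linarith only [hFnonneg v, hFu]
    have hzero' : h ts < 0 := by rw [← h0]; exact hzero
    linarith only [hmax0, hzero']
  · -- 0 < ts, interior critical point
    have htsltT : ts < T := lt_of_le_of_ne (Set.mem_Icc.1 htsmem).2 htsT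
    have hloc : IsLocalMax h ts := htsmax.isLocalMax (Icc_mem_nhds hts0 htsltT)
    have hderiv0 : deriv h ts = 0 := hloc.deriv_eq_zero
    rw [(hD ts).deriv] at hderiv0
    set w : ℝ := ts * u + v with hw
    have hcrit : deriv F u * w = deriv F w * u := by linarith [hderiv0]
    rcases lt_trichotomy w 0 with hwneg | hwzero | hwpos
    · -- w < 0
      have hfw : deriv F w < 0 := deriv_neg_of F hnegd hwneg
      have hFw : 0 < F w := F_pos_aux F hF hF0 hpos hnegd (ne_of_lt hwneg)
      have hfv : deriv F u * v = deriv F w * u - ts * (deriv F u * u) := by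
        have hexp : deriv F u * (ts * u + v) = ts * (deriv F u * u) + deriv F u * v := by ring
        rw [hw, hexp] at hcrit
        linarith
      have hts' : h ts = -(ts ^ 2 + 1) / 2 * (deriv F u * u) + ts * (deriv F w * u) + F u - F w := by
        rw [hdefh]
        simp only [← hw]
        rw [hfv]
        ring
      have hp1 : ts * (deriv F w * u) < 0 :=
        mul_neg_of_pos_of_neg hts0 (mul_neg_of_neg_of_pos hfw hu)
      have hp2 : 0 ≤ ts ^ 2 * (deriv F u * u) := by positivity
      have hltz : h ts < 0 := by rw [hts']; linarith only [hp1, hp2, hFu, hFw]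
      linarith only [hmax0, hltz]
    · -- w = 0
      have hveq : v = -(ts * u) := by rw [hw] at hwzero; linarith
      have hltz : h ts < 0 := by
        rw [hdefh]
        simp only
        rw [hveq]
        have he : ts * u + -(ts * u) = 0 := by ring
        rw [he, hF0]
        linarith only [hFu, mul_pos hfu hu,
          mul_nonneg (sq_nonneg ts) (mul_pos hfu hu).le]
      linarith only [hmax0, hltz]
    · -- w > 0 : then w = u
      have hwu : w = u := by
        have hdiv : deriv F w / |w| = deriv F u / |u| := by
          rw [abs_of_pos hwpos, abs_of_pos hu, div_eq_div_iff (ne_of_gt hwpos) (ne_of_gt hu)]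
          linarith [hcrit]
        exact hmono_pos.injOn (Set.mem_Ioi.2 hwpos) (Set.mem_Ioi.2 hu) hdiv
      have hveq : v = u - ts * u := by rw [hw] at hwu; linarith
      rcases eq_or_ne ts 1 with hts1 | hts1
      · -- ts = 1 hence v = 0; use `special`
        have hv0 : v = 0 := by rw [hveq, hts1]; ring
        have ht01 : t₀ ≠ 1 := by
          intro hq
          apply hne
          rw [hq, hv0, one_mul, add_zero]
        have hsp := special F hF hmono_pos hu ht₀ ht01
        rw [hdefh]
        simp only
        rw [hv0]
        simpa using hsp
      · -- ts ≠ 1 : h ts = -(ts-1)^2 * fu*u/2 < 0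
        have hts' : h ts = -((ts - 1) ^ 2) / 2 * (deriv F u * u) := by
          rw [hdefh]
          simp only
          rw [hveq]
          have : ts * u + (u - ts * u) = u := by ring
          rw [this]
          ring
        have hltz : h ts < 0 := by
          rw [hts']
          have h1 : 0 < (ts - 1) ^ 2 := by
            have hne1 : ts - 1 ≠ 0 := sub_ne_zero.2 hts1
            positivity
          linarith only [mul_pos h1 (mul_pos hfu hu)]
        linarith only [hmax0, hltz]


/-- (cf. [Szulkin–Weth, Lemma 38] and Remark 5.4 b)).
Let `F : ℝ → ℝ` be differentiable with `F(0) = 0`, `f := F'`, `f(u) = o(u)` as `u → 0`,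
and assume `u ↦ f(u)/|u|` is strictly increasing on `(−∞,0)` and on `(0,∞)`.  Then the
scalar condition (F9) holds:
`((t²−1)/2) f(u)u + t f(u)v + F(u) − F(tu+v) ≤ 0` for all `t ≥ 0`, `u, v ∈ ℝ`, with
strict inequality whenever `u ≠ tu + v`. -/
theorem statement14 (F : ℝ → ℝ) (hF : Differentiable ℝ F) (hF0 : F 0 = 0)
    (hsmall : (fun u => deriv F u) =o[nhds (0 : ℝ)] fun u : ℝ => u)
    (hmono_neg : StrictMonoOn (fun u : ℝ => deriv F u / |u|) (Set.Iio 0))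
    (hmono_pos : StrictMonoOn (fun u : ℝ => deriv F u / |u|) (Set.Ioi 0)) :
    ∀ t : ℝ, 0 ≤ t → ∀ u v : ℝ,
      (t ^ 2 - 1) / 2 * (deriv F u * u) + t * (deriv F u * v) + F u - F (t * u + v) ≤ 0 ∧
      (u ≠ t * u + v →
        (t ^ 2 - 1) / 2 * (deriv F u * u) + t * (deriv F u * v) + F u
          - F (t * u + v) < 0) := by
  intro t ht u v
  have hpos : ∀ s : ℝ, 0 < s → 0 < deriv F s / s := fun s hs => div_pos_of F hsmall hmono_pos hs
  have hnegd : ∀ s : ℝ, s < 0 → deriv F s / |s| < 0 :=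
    fun s hs => div_neg_of F hsmall hmono_neg hs
  have hf0 : deriv F 0 = 0 := deriv_zero_of F hsmall
  have hstrict : u ≠ t * u + v →
      (t ^ 2 - 1) / 2 * (deriv F u * u) + t * (deriv F u * v) + F u - F (t * u + v) < 0 := by
    intro hne
    rcases lt_trichotomy u 0 with hu | hu | hu
    · -- u < 0 : apply key_pos to G = F ∘ neg
      set G : ℝ → ℝ := fun x => F (-x) with hGdef
      have hG : Differentiable ℝ G := hF.comp differentiable_neg
      have hG0 : G 0 = 0 := by simp [hGdef, hF0]
      have hGd : ∀ x : ℝ, deriv G x = -deriv F (-x) := by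
        intro x
        have hh : HasDerivAt G (deriv F (-x) * (-1)) x :=
          (hF (-x)).hasDerivAt.comp x (hasDerivAt_neg x)
        rw [hh.deriv]
        ring
      have hGsmall : (fun x => deriv G x) =o[nhds (0 : ℝ)] fun x : ℝ => x := by
        have hk : Filter.Tendsto (fun x : ℝ => -x) (nhds 0) (nhds 0) := by
          simpa using (continuous_neg.tendsto (0 : ℝ))
        have h1 : (fun x : ℝ => deriv F (-x)) =o[nhds (0 : ℝ)] fun x : ℝ => -x :=
          hsmall.comp_tendsto hk
        have h2 : (fun x : ℝ => -deriv F (-x)) =o[nhds (0 : ℝ)] fun x : ℝ => -x := h1.neg_left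
        have h3 : (fun x : ℝ => -deriv F (-x)) =o[nhds (0 : ℝ)] fun x : ℝ => x :=
          h2.trans_isBigO ((isBigO_refl (fun x : ℝ => x) (nhds 0)).neg_left)
        exact h3.congr' (Filter.Eventually.of_forall fun x => (hGd x).symm)
          (Filter.Eventually.of_forall fun x => rfl)
      have hGpos : StrictMonoOn (fun x : ℝ => deriv G x / |x|) (Set.Ioi 0) := by
        intro x1 hx1 x2 hx2 hlt
        have h12 : -x2 < -x1 := by linarith
        have := hmono_neg (Set.mem_Iio.2 (by simpa using (Set.mem_Ioi.1 hx2 : (0:ℝ) < x2) : -x2 < 0))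
          (Set.mem_Iio.2 (by simpa using (Set.mem_Ioi.1 hx1 : (0:ℝ) < x1) : -x1 < 0)) h12
        simp only [abs_neg] at this
        simp only [hGd, neg_div]
        linarith
      have hGneg : StrictMonoOn (fun x : ℝ => deriv G x / |x|) (Set.Iio 0) := by
        intro x1 hx1 x2 hx2 hlt
        have h12 : -x2 < -x1 := by linarith
        have := hmono_pos (Set.mem_Ioi.2 (by simpa using (Set.mem_Iio.1 hx2 : x2 < 0) : 0 < -x2))
          (Set.mem_Ioi.2 (by simpa using (Set.mem_Iio.1 hx1 : x1 < 0) : 0 < -x1)) h12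
        simp only [abs_neg] at this
        simp only [hGd, neg_div]
        linarith
      have hne' : -u ≠ t * (-u) + (-v) := by
        intro hq
        apply hne
        linarith [hq]
      have hres := key_pos G hG hG0 hGsmall hGneg hGpos
        (by linarith : (0:ℝ) < -u) ht (-v) hne'
      have harg : t * (-u) + (-v) = -(t * u + v) := by ring
      rw [harg] at hres
      have hGval : G (-(t * u + v)) = F (t * u + v) := by simp [hGdef]
      have hGu : G (-u) = F u := by simp [hGdef]
      rw [hGval, hGu, hGd] at hres
      simp only [neg_neg] at hres
      linarith only [hres]
    · -- u = 0
      subst hu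
      have hv : v ≠ 0 := by
        intro hq
        apply hne
        rw [hq]; ring
      have hFv : 0 < F v := F_pos_aux F hF hF0 hpos hnegd hv
      have harg : t * 0 + v = v := by ring
      rw [harg, hf0, hF0]
      nlinarith [hFv]
    · exact key_pos F hF hF0 hsmall hmono_neg hmono_pos hu ht v hne
  constructor
  · rcases eq_or_ne u (t * u + v) with heq | hne
    · -- equality case: value is -(t-1)^2/2 * (f u * u) ≤ 0
      have hfu : 0 ≤ deriv F u * u := by
        rcases lt_trichotomy u 0 with hu | hu | hu
        · nlinarith [deriv_neg_of F hnegd hu, hu]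
        · simp [hu]
        · exact (mul_pos (deriv_pos_of F hpos hu) hu).le
      have hv : v = u - t * u := by linarith [heq]
      rw [← heq, hv]
      nlinarith [hfu, sq_nonneg (t - 1), mul_nonneg (sq_nonneg (t - 1)) hfu]
    · exact (hstrict hne).le
  · exact hstrict

end
end

section
/- Let p > 2. For all t ≥ 0 and all u, v ∈ ℝ³ with u ≠ tu + v, one has ((t²−1)/2)·|u|^p + t·|u|^{p−2}⟨u,v⟩ + (1/p)|u|^p − (1/p)|tu+v|^p < 0, where |u|^{p−2}u is understood to be 0 for u = 0. In other words, the model nonlinearity F(u) = (1/p)|u|^p satisfies condition (F9). -/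
open RealInnerProductSpace

noncomputable section

private lemma glem (p : ℝ) (hp : 2 < p) {x : ℝ} (hx : 0 ≤ x) (hx1 : x ≠ 1) :
    (x ^ 2 - 1) / 2 - (x ^ p - 1) / p < 0 := by
  have hp0 : (0:ℝ) < p := by linarith
  set g : ℝ → ℝ := fun y => (y ^ 2 - 1) / 2 - (y ^ p - 1) / p with hg
  have hdg : ∀ y : ℝ, HasDerivAt g (y - y ^ (p - 1)) y := by
    intro y
    have h1 : HasDerivAt (fun y : ℝ => y ^ (2:ℕ)) (2 * y) y := by
      simpa using hasDerivAt_pow 2 y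
    have h2 : HasDerivAt (fun y : ℝ => y ^ p) (p * y ^ (p - 1)) y :=
      Real.hasDerivAt_rpow_const (Or.inr (by linarith))
    have h3 := ((h1.sub_const 1).div_const 2).sub ((h2.sub_const 1).div_const p)
    rw [mul_div_cancel_left₀ _ (two_ne_zero), mul_div_cancel_left₀ _ hp0.ne'] at h3
    exact h3
  have hcont : Continuous g := by
    rw [continuous_iff_continuousAt]; exact fun y => (hdg y).continuousAt
  have hg1 : g 1 = 0 := by simp [hg, Real.one_rpow]
  have key : g x < 0 := by
    rcases lt_or_gt_of_ne hx1 with h | h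
    · have hmono : StrictMonoOn g (Set.Icc 0 1) := by
        apply strictMonoOn_of_deriv_pos (convex_Icc 0 1) hcont.continuousOn
        intro y hy
        rw [interior_Icc] at hy
        rw [(hdg y).deriv]
        have h5 : y ^ (p - 1) < y ^ (1:ℝ) :=
          Real.rpow_lt_rpow_of_exponent_gt hy.1 hy.2 (by linarith)
        rw [Real.rpow_one] at h5
        linarith
      have h6 := hmono ⟨hx, le_of_lt h⟩ ⟨zero_le_one, le_refl 1⟩ h
      rwa [hg1] at h6
    · have hmono : StrictAntiOn g (Set.Ici 1) := by
        apply strictAntiOn_of_deriv_neg (convex_Ici 1) hcont.continuousOn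
        intro y hy
        rw [interior_Ici] at hy
        rw [(hdg y).deriv]
        have h5 : y ^ (1:ℝ) < y ^ (p - 1) :=
          Real.rpow_lt_rpow_of_exponent_lt hy (by linarith)
        rw [Real.rpow_one] at h5
        linarith
      have h6 := hmono Set.self_mem_Ici (le_of_lt h) h
      rwa [hg1] at h6
  exact key

private lemma keylem (p : ℝ) (hp : 2 < p) {t α : ℝ} (ht : 0 ≤ t) (hα : 0 ≤ α)
    (hne : ¬(t = 1 ∧ α = 1)) :
    t * α - (t ^ 2 + 1) / 2 - (α ^ p - 1) / p < 0 := by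
  by_cases hα1 : α = 1
  · subst hα1
    have ht1 : t ≠ 1 := fun h => hne ⟨h, rfl⟩
    rw [Real.one_rpow]
    have hz : ((1:ℝ) - 1) / p = 0 := by simp
    rw [hz]
    rcases lt_or_gt_of_ne ht1 with h | h
    · nlinarith [mul_pos (by linarith : (0:ℝ) < 1 - t) (by linarith : (0:ℝ) < 1 - t)]
    · nlinarith [mul_pos (by linarith : (0:ℝ) < t - 1) (by linarith : (0:ℝ) < t - 1)]
  · have hgl := glem p hp hα hα1
    nlinarith [sq_nonneg (t - α)]

/-- The model nonlinearity `F(u) = |u|^p/p`, `p > 2`, satisfies condition (F9): for all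
`t ≥ 0` and `u, v ∈ ℝ³` with `u ≠ tu + v`,
`((t²−1)/2)|u|^p + t|u|^{p−2}⟨u,v⟩ + |u|^p/p − |tu+v|^p/p < 0`
(the powers are real powers; `|u|^{p−2}⟨u,v⟩ = 0` when `u = 0` since `p > 2`). -/
theorem statement15 (p : ℝ) (hp : 2 < p) :
    ∀ t : ℝ, 0 ≤ t → ∀ u v : EuclideanSpace ℝ (Fin 3), u ≠ t • u + v →
      (t ^ 2 - 1) / 2 * ‖u‖ ^ p + t * (‖u‖ ^ (p - 2) * ⟪u, v⟫) + (1 / p) * ‖u‖ ^ p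
        - (1 / p) * ‖t • u + v‖ ^ p < 0 := by
  intro t ht u v hne
  have hp0 : (0:ℝ) < p := by linarith
  by_cases hu : u = 0
  · subst hu
    have hv : v ≠ 0 := by
      intro h
      apply hne
      simp [h]
    simp only [norm_zero, smul_zero, zero_add, inner_zero_left]
    rw [Real.zero_rpow (by linarith : p ≠ 0), Real.zero_rpow (by intro h; linarith [sub_eq_zero.mp h] : p - 2 ≠ 0)]
    have hvp : 0 < ‖v‖ ^ p := Real.rpow_pos_of_pos (norm_pos_iff.mpr hv) p
    have h1p : 0 < 1/p := by positivity
    nlinarith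
  · have ha : 0 < ‖u‖ := norm_pos_iff.mpr hu
    set w := t • u + v with hw
    set a := ‖u‖ with hadef
    set b := ‖w‖ with hbdef
    clear_value w a b
    have hb : 0 ≤ b := hbdef ▸ norm_nonneg _
    have hap : 0 < a ^ p := Real.rpow_pos_of_pos ha p
    have hap2 : 0 < a ^ (p - 2) := Real.rpow_pos_of_pos ha _
    have hinner : ⟪u, v⟫ = ⟪u, w⟫ - t * a ^ 2 := by
      rw [hw, inner_add_right, real_inner_smul_right, real_inner_self_eq_norm_sq, ← hadef]
      ring
    have h1 : a ^ p = a ^ (p - 2) * a ^ (2:ℕ) := by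
      rw [← Real.rpow_natCast a 2, ← Real.rpow_add ha]
      norm_num
    have h3 : (b / a) ^ p = b ^ p / a ^ p := Real.div_rpow hb ha.le p
    have hIneq2 : ⟪u, w⟫ ≤ a * b := by
      rw [hadef, hbdef]; exact real_inner_le_norm u w
    have hidentity :
        (t ^ 2 - 1) / 2 * a ^ p + t * (a ^ (p - 2) * ⟪u, v⟫) + (1 / p) * a ^ p
          - (1 / p) * b ^ p
        = a ^ (p - 2) * a ^ (2:ℕ) * (t * (b / a) - (t ^ 2 + 1) / 2 - ((b / a) ^ p - 1) / p)
          + t * (a ^ (p - 2) * (⟪u, w⟫ - a * b)) := by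
      rw [hinner, h3, h1]
      field_simp
      ring
    rw [hidentity]
    by_cases hcase : t = 1 ∧ b / a = 1
    · obtain ⟨ht1, hba⟩ := hcase
      have hba' : b = a := by
        field_simp at hba; linarith
      have hlt : ⟪u, w⟫ < a * b := by
        rcases lt_or_eq_of_le hIneq2 with h | h
        · exact h
        · exfalso
          apply hne
          have h4 : ‖u - w‖ ^ 2 = 0 := by
            rw [norm_sub_sq_real]
            rw [← hadef, ← hbdef, h, hba']
            ring
          have h5 : u - w = 0 := by
            rw [← norm_eq_zero]
            nlinarith [norm_nonneg (u - w)]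
          exact sub_eq_zero.mp h5
      rw [ht1, hba, Real.one_rpow]
      have hfac : 0 < a ^ (p - 2) * (a * b - ⟪u, w⟫) := by
        apply mul_pos hap2
        linarith
      have hsimp : (1 * (1:ℝ) - ((1:ℝ) ^ 2 + 1) / 2 - ((1:ℝ) - 1) / p) = 0 := by norm_num
      rw [hsimp, mul_zero, zero_add, one_mul]
      linarith [hfac]
    · have hK := keylem p hp ht (div_nonneg hb ha.le) hcase
      have hterm1 : a ^ (p - 2) * a ^ (2:ℕ)
          * (t * (b / a) - (t ^ 2 + 1) / 2 - ((b / a) ^ p - 1) / p) < 0 := by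
        exact mul_neg_of_pos_of_neg (mul_pos hap2 (pow_pos ha 2)) hK
      have hterm2 : t * (a ^ (p - 2) * (⟪u, w⟫ - a * b)) ≤ 0 := by
        have hd : ⟪u, w⟫ - a * b ≤ 0 := by linarith
        have h6 : a ^ (p - 2) * (⟪u, w⟫ - a * b) ≤ 0 :=
          mul_nonpos_iff.mpr (Or.inl ⟨hap2.le, hd⟩)
        exact mul_nonpos_iff.mpr (Or.inl ⟨ht, h6⟩)
      linarith

end
end

section
/- Let 2 < p < 6 < q and let M be an invertible real 3×3 matrix. Then the function F : ℝ³ → ℝ, F(u) = (1/p)·((1 + |Mu|^q)^{p/q} − 1), is differentiable and satisfies condition (F9): for all t ≥ 0 and all u, v ∈ ℝ³, ((t²−1)/2)·⟨∇F(u),u⟩ + t·⟨∇F(u),v⟩ + F(u) − F(tu+v) ≤ 0, with strict inequality whenever u ≠ tu+v. -/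
open RealInnerProductSpace

noncomputable section

/-- The model nonlinearity `F(u) = (1/p)((1 + |Mu|^q)^{p/q} − 1)` (real powers). -/
def modelF (p q : ℝ) (M : Matrix (Fin 3) (Fin 3) ℝ) (u : EuclideanSpace ℝ (Fin 3)) : ℝ :=
  (1 / p) * ((1 + ‖Matrix.toEuclideanLin M u‖ ^ q) ^ (p / q) - 1)

namespace S16aux

open Real Set

/-- The scalar profile `ψ(a) = (1/p)((1+a^{q/2})^{p/q} − 1)`, so that `F(u) = ψ(‖Mu‖²)`. -/
def psi (p q a : ℝ) : ℝ := (1 / p) * ((1 + a ^ (q / 2)) ^ (p / q) - 1)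

/-- The derivative of `psi`. -/
def psi' (p q a : ℝ) : ℝ := (1 / 2) * ((1 + a ^ (q / 2)) ^ (p / q - 1) * a ^ (q / 2 - 1))

lemma hasDerivAt_psi {p q : ℝ} (hp2 : 2 < p) (hq : 6 < q) {a : ℝ} (ha : 0 ≤ a) :
    HasDerivAt (psi p q) (psi' p q a) a := by
  have hq0 : (0:ℝ) < q := by linarith
  have hp0 : (0:ℝ) < p := by linarith
  have h1 : HasDerivAt (fun x : ℝ => 1 + x ^ (q/2)) (q/2 * a ^ (q/2 - 1)) a :=
    (Real.hasDerivAt_rpow_const (Or.inr (by linarith))).const_add 1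
  have hB : (0:ℝ) < 1 + a ^ (q/2) := by
    have := Real.rpow_nonneg ha (q/2); linarith
  have h2 : HasDerivAt (fun x : ℝ => x ^ (p/q))
      (p/q * (1 + a ^ (q/2)) ^ (p/q - 1)) (1 + a ^ (q/2)) :=
    Real.hasDerivAt_rpow_const (Or.inl hB.ne')
  have h3 := (h2.comp a h1)
  have h4 := (h3.sub_const 1).const_mul (1/p)
  refine h4.congr_deriv ?_
  unfold psi'
  field_simp

lemma psi'_nonneg {p q : ℝ} {a : ℝ} (ha : 0 ≤ a) : 0 ≤ psi' p q a := by
  have h1 : (0:ℝ) ≤ 1 + a ^ (q/2) := by have := Real.rpow_nonneg ha (q/2); linarith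
  unfold psi'
  have := Real.rpow_nonneg h1 (p/q - 1)
  have := Real.rpow_nonneg ha (q/2 - 1)
  positivity

lemma psi'_pos {p q : ℝ} {a : ℝ} (ha : 0 < a) : 0 < psi' p q a := by
  have h1 : (0:ℝ) < 1 + a ^ (q/2) := by have := Real.rpow_nonneg ha.le (q/2); linarith
  unfold psi'
  have := Real.rpow_pos_of_pos h1 (p/q - 1)
  have := Real.rpow_pos_of_pos ha (q/2 - 1)
  positivity

lemma hasDerivAt_psi' {p q : ℝ} (hp2 : 2 < p) (hq : 6 < q) {a : ℝ} (ha : 0 < a) :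
    ∃ D, 0 < D ∧ HasDerivAt (psi' p q) D a := by
  have hq0 : (0:ℝ) < q := by linarith
  set m := q/2 with hm
  set k := p/q with hk
  have hB : (0:ℝ) < 1 + a ^ m := by
    have := Real.rpow_nonneg ha.le m; linarith
  have h1 : HasDerivAt (fun x : ℝ => 1 + x ^ m) (m * a ^ (m - 1)) a :=
    (Real.hasDerivAt_rpow_const (Or.inl ha.ne')).const_add 1
  have h2 : HasDerivAt (fun x : ℝ => x ^ (k - 1))
      ((k-1) * (1 + a ^ m) ^ (k - 1 - 1)) (1 + a ^ m) :=
    Real.hasDerivAt_rpow_const (Or.inl hB.ne')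
  have h3 := h2.comp a h1
  have h4 : HasDerivAt (fun x : ℝ => x ^ (m - 1)) ((m-1) * a ^ (m - 1 - 1)) a :=
    Real.hasDerivAt_rpow_const (Or.inl ha.ne')
  have h5 := ((h3.mul h4).const_mul (1/2 : ℝ))
  refine ⟨_, ?_, h5⟩
  -- positivity of the second derivative
  have hP : (0:ℝ) < (1 + a ^ m) ^ (k - 1 - 1) := Real.rpow_pos_of_pos hB _
  have hQ : (0:ℝ) < a ^ (m - 1 - 1) := Real.rpow_pos_of_pos ha _
  have hX : (0:ℝ) < a ^ m := Real.rpow_pos_of_pos ha _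
  have hRR : a ^ (m-1) * a ^ (m-1) = a ^ (m - 1 - 1) * a ^ m := by
    rw [← Real.rpow_add ha, ← Real.rpow_add ha]; try ring_nf
  have hBk : (1 + a ^ m) ^ (k - 1) = (1 + a ^ m) ^ (k - 1 - 1) * (1 + a ^ m) := by
    rw [← Real.rpow_add_one hB.ne' (k - 1 - 1)]; try ring_nf
  have hkm : k * m = p / 2 := by rw [hk, hm]; field_simp; try ring
  have hm1 : 1 < m := by rw [hm]; linarith
  have hkm1 : 1 < k * m := by rw [hkm]; linarith
  simp only [Function.comp]
  have hkey : 1 / 2 *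
      ((k - 1) * (1 + a ^ m) ^ (k - 1 - 1) * (m * a ^ (m - 1)) * a ^ (m - 1) +
        (1 + a ^ m) ^ (k - 1) * ((m - 1) * a ^ (m - 1 - 1)))
      = 1/2 * ((1 + a ^ m) ^ (k - 1 - 1) * a ^ (m - 1 - 1)) * ((k*m - 1) * a ^ m + (m - 1)) := by
    rw [hBk]
    linear_combination (1/2*(k-1)*m*((1 + a ^ m) ^ (k - 1 - 1))) * hRR
  rw [hkey]
  have hbr : 0 < (k*m - 1) * a ^ m + (m - 1) := by nlinarith
  positivity

lemma psi'_continuousOn {p q : ℝ} (hq : 6 < q) : ContinuousOn (psi' p q) (Ici 0) := by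
  intro a ha
  apply ContinuousWithinAt.mul continuousWithinAt_const
  apply ContinuousWithinAt.mul
  · apply ContinuousWithinAt.rpow_const
    · exact (continuousWithinAt_const.add ((continuousWithinAt_id).rpow_const
        (Or.inr (by linarith))))
    · left
      show (1 + a ^ (q/2)) ≠ 0
      have h0 : (0:ℝ) ≤ a ^ (q/2) := Real.rpow_nonneg ha (q/2)
      intro h; linarith [h.ge, h.le]
  · exact continuousWithinAt_id.rpow_const (Or.inr (by linarith))

lemma strictConvexOn_psi {p q : ℝ} (hp2 : 2 < p) (hq : 6 < q) :
    StrictConvexOn ℝ (Ici 0) (psi p q) := by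
  have hmono : StrictMonoOn (psi' p q) (Ici 0) := by
    apply StrictMonoOn.mono (s := Ici (0:ℝ)) ?_ (subset_refl _)
    apply strictMonoOn_of_deriv_pos (convex_Ici 0) (psi'_continuousOn hq)
    intro a ha
    rw [interior_Ici] at ha
    obtain ⟨D, hD, hDD⟩ := hasDerivAt_psi' hp2 hq ha
    rwa [hDD.deriv]
  apply StrictMonoOn.strictConvexOn_of_deriv (convex_Ici 0)
  · intro a ha
    exact ((hasDerivAt_psi hp2 hq ha).continuousAt).continuousWithinAt
  · rw [interior_Ici]
    intro a ha b hb hab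
    rw [(hasDerivAt_psi hp2 hq (le_of_lt ha)).deriv,
        (hasDerivAt_psi hp2 hq (le_of_lt hb)).deriv]
    exact hmono (le_of_lt ha : (0:ℝ) ≤ a) (le_of_lt hb : (0:ℝ) ≤ b) hab

lemma tangent_lt {p q : ℝ} (hp2 : 2 < p) (hq : 6 < q) {a b : ℝ} (ha : 0 ≤ a) (hb : 0 ≤ b)
    (hab : a ≠ b) : psi p q a + psi' p q a * (b - a) < psi p q b := by
  have hconv := strictConvexOn_psi (p := p) (q := q) hp2 hq
  rcases lt_or_gt_of_ne hab with h | h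
  · have := hconv.lt_slope_of_hasDerivAt ha hb h (hasDerivAt_psi hp2 hq ha)
    rw [slope_def_field] at this
    have hba : 0 < b - a := by linarith
    have := (lt_div_iff₀ hba).mp this
    linarith
  · have := hconv.slope_lt_of_hasDerivAt hb ha h (hasDerivAt_psi hp2 hq ha)
    rw [slope_def_field] at this
    have hba : 0 < a - b := by linarith
    have := (div_lt_iff₀ hba).mp this
    linarith

lemma tangent_le {p q : ℝ} (hp2 : 2 < p) (hq : 6 < q) {a b : ℝ} (ha : 0 ≤ a) (hb : 0 ≤ b) :
    psi p q a + psi' p q a * (b - a) ≤ psi p q b := by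
  rcases eq_or_ne a b with rfl | h
  · simp
  · exact (tangent_lt hp2 hq ha hb h).le

abbrev E3 := EuclideanSpace ℝ (Fin 3)

/-- The matrix `M` as a continuous linear map on Euclidean space. -/
def Lc (M : Matrix (Fin 3) (Fin 3) ℝ) : E3 →L[ℝ] E3 :=
  LinearMap.toContinuousLinearMap (Matrix.toEuclideanLin M)

lemma modelF_eq_psi (p q : ℝ) (M : Matrix (Fin 3) (Fin 3) ℝ) (u : E3) :
    modelF p q M u = psi p q (‖Lc M u‖ ^ 2) := by
  have hr : (0:ℝ) ≤ ‖Matrix.toEuclideanLin M u‖ := norm_nonneg _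
  have : (‖Matrix.toEuclideanLin M u‖ ^ 2) ^ (q / 2) = ‖Matrix.toEuclideanLin M u‖ ^ q := by
    rw [← Real.rpow_natCast ‖Matrix.toEuclideanLin M u‖ 2, ← Real.rpow_mul hr]
    norm_num
    ring_nf
  unfold modelF psi Lc
  rw [LinearMap.coe_toContinuousLinearMap']
  rw [this]

lemma hasFDerivAt_normsq (M : Matrix (Fin 3) (Fin 3) ℝ) (u : E3) :
    HasFDerivAt (fun w : E3 => ‖Lc M w‖ ^ 2)
      ((fderivInnerCLM ℝ (Lc M u, Lc M u)).comp ((Lc M).prod (Lc M))) u := by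
  have h := ((Lc M).hasFDerivAt (x := u)).inner ℝ ((Lc M).hasFDerivAt (x := u))
  have hfun : (fun w : E3 => ‖Lc M w‖ ^ 2) = fun w => ⟪Lc M w, Lc M w⟫ :=
    funext fun w => (real_inner_self_eq_norm_sq _).symm
  rw [hfun]
  exact h

lemma hasFDerivAt_modelF (p q : ℝ) (hp2 : 2 < p) (hq : 6 < q)
    (M : Matrix (Fin 3) (Fin 3) ℝ) (u : E3) :
    HasFDerivAt (modelF p q M)
      (psi' p q (‖Lc M u‖ ^ 2) •
        ((fderivInnerCLM ℝ (Lc M u, Lc M u)).comp ((Lc M).prod (Lc M)))) u := by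
  have hN := hasFDerivAt_normsq M u
  have hψ := hasDerivAt_psi hp2 hq (p := p) (q := q) (a := ‖Lc M u‖ ^ 2) (by positivity)
  have h := hψ.comp_hasFDerivAt u hN
  have heq : modelF p q M = fun w => psi p q (‖Lc M w‖ ^ 2) :=
    funext fun w => modelF_eq_psi p q M w
  rw [heq]
  exact h

lemma inner_gradient (p q : ℝ) (hp2 : 2 < p) (hq : 6 < q)
    (M : Matrix (Fin 3) (Fin 3) ℝ) (u w : E3) :
    ⟪gradient (modelF p q M) u, w⟫ =
      psi' p q (‖Lc M u‖ ^ 2) * (2 * ⟪Lc M u, Lc M w⟫) := by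
  have h := hasFDerivAt_modelF p q hp2 hq M u
  rw [gradient, h.fderiv, InnerProductSpace.toDual_symm_apply]
  rw [ContinuousLinearMap.smul_apply, ContinuousLinearMap.comp_apply,
    ContinuousLinearMap.prod_apply, fderivInnerCLM_apply]
  rw [smul_eq_mul, real_inner_comm (Lc M w) (Lc M u)]
  ring

lemma Lc_injective (M : Matrix (Fin 3) (Fin 3) ℝ) (hM : IsUnit M.det) :
    Function.Injective (Lc M) := by
  have hMU : IsUnit M := (Matrix.isUnit_iff_isUnit_det M).mpr hM
  have hmv : Function.Injective M.mulVec := Matrix.mulVec_injective_iff_isUnit.mpr hMU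
  intro z w hzw
  have h1 : M.mulVec ((WithLp.equiv 2 (Fin 3 → ℝ)) z) = M.mulVec ((WithLp.equiv 2 (Fin 3 → ℝ)) w) := by
    have h2 := congrArg (WithLp.equiv 2 (Fin 3 → ℝ)) hzw
    simpa [Lc, Matrix.toEuclideanLin_apply] using h2
  have h3 := hmv h1
  exact (WithLp.equiv 2 (Fin 3 → ℝ)).injective h3

end S16aux

set_option maxHeartbeats 1000000 in
open S16aux in
/-- cf. (6.5). -/
theorem statement16 (p q : ℝ) (hp2 : 2 < p) (hp6 : p < 6) (hq : 6 < q)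
    (M : Matrix (Fin 3) (Fin 3) ℝ) (hM : IsUnit M.det) :
    Differentiable ℝ (modelF p q M) ∧
    ∀ t : ℝ, 0 ≤ t → ∀ u v : EuclideanSpace ℝ (Fin 3),
      (t ^ 2 - 1) / 2 * ⟪gradient (modelF p q M) u, u⟫
          + t * ⟪gradient (modelF p q M) u, v⟫
          + modelF p q M u - modelF p q M (t • u + v) ≤ 0 ∧
      (u ≠ t • u + v →
        (t ^ 2 - 1) / 2 * ⟪gradient (modelF p q M) u, u⟫
            + t * ⟪gradient (modelF p q M) u, v⟫
            + modelF p q M u - modelF p q M (t • u + v) < 0) := by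
  constructor
  · exact fun u => (hasFDerivAt_modelF p q hp2 hq M u).differentiableAt
  intro t ht u v
  set x := Lc M u with hx
  set y := Lc M (t • u + v) with hy
  have hLv : Lc M v = y - t • x := by
    rw [hy, hx, map_add, map_smul]; abel
  set a : ℝ := ‖x‖ ^ 2 with hA
  set b : ℝ := ‖y‖ ^ 2 with hB
  set c : ℝ := ⟪x, y⟫ with hc
  set P : ℝ := psi' p q a with hP
  have ha0 : 0 ≤ a := by positivity
  have hb0 : 0 ≤ b := by positivity
  have h1 : ⟪gradient (modelF p q M) u, u⟫ = P * (2 * a) := by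
    rw [inner_gradient p q hp2 hq M u u, ← hx, real_inner_self_eq_norm_sq]
  have h2 : ⟪gradient (modelF p q M) u, v⟫ = P * (2 * (c - t * a)) := by
    rw [inner_gradient p q hp2 hq M u v, ← hx, hLv]
    rw [inner_sub_right, real_inner_smul_right, real_inner_self_eq_norm_sq]
    try ring_nf
  have hF1 : modelF p q M u = psi p q a := modelF_eq_psi p q M u
  have hF2 : modelF p q M (t • u + v) = psi p q b := modelF_eq_psi p q M _
  have hPn : 0 ≤ P := psi'_nonneg ha0
  have hcs : c ≤ ‖x‖ * ‖y‖ := real_inner_le_norm x y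
  have key1 : 2 * t * c ≤ t ^ 2 * a + b := by
    nlinarith [sq_nonneg (t * ‖x‖ - ‖y‖), mul_nonneg ht (sub_nonneg.mpr hcs)]
  have key2 : psi p q a + P * (b - a) ≤ psi p q b := tangent_le hp2 hq ha0 hb0
  clear_value x y a b c P
  set PA := psi p q a with hPA
  set PB := psi p q b with hPB
  clear_value PA PB
  constructor
  · rw [h1, h2, hF1, hF2]
    nlinarith [mul_le_mul_of_nonneg_left key1 hPn, key2]
  · intro hne
    have hxy : x ≠ y := by
      intro h
      rw [hx, hy] at h
      exact hne (Lc_injective M hM h)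
    rw [h1, h2, hF1, hF2]
    rcases eq_or_ne a b with hab | hab
    · -- equal norms: strict Cauchy–Schwarz type step
      have hd : (0:ℝ) < ‖x - y‖ ^ 2 :=
        pow_pos (norm_pos_iff.mpr (sub_ne_zero.mpr hxy)) 2
      have hexp : ‖x - y‖ ^ 2 = a - 2 * c + b := by
        rw [hA, hB, hc]; exact norm_sub_sq_real x y
      have hclt : c < a := by
        have h5 : (0:ℝ) < a - 2 * c + b := hexp ▸ hd
        linarith [hab.le, hab.ge]
      have hA0 : 0 < a := by
        rcases ha0.lt_or_eq with h | h
        · exact h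
        · exfalso
          have hx0 : x = 0 := by
            have h0 : ‖x‖ ^ 2 = 0 := by rw [← hA, ← h]
            exact norm_eq_zero.mp ((pow_eq_zero_iff two_ne_zero).mp h0)
          have hc0 : c = 0 := by rw [hc, hx0, inner_zero_left]
          rw [← h] at hclt
          linarith
      have hPpos : 0 < P := by rw [hP]; exact psi'_pos hA0
      have keystrict : 2 * t * c < (t ^ 2 + 1) * a := by
        rcases ht.lt_or_eq with ht' | ht'
        · nlinarith [mul_pos ht' (sub_pos.mpr hclt), mul_nonneg (sq_nonneg (t - 1)) hA0.le]
        · rw [← ht']; simpa using hA0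
      have hpsiab : PA = PB := by rw [hPA, hPB, hab]
      nlinarith [mul_lt_mul_of_pos_left keystrict hPpos]
    · have key2' : PA + P * (b - a) < PB := by
        rw [hPA, hPB, hP]; exact tangent_lt hp2 hq ha0 hb0 hab
      nlinarith [mul_le_mul_of_nonneg_left key1 hPn, key2']

end
end
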